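/- arXiv:2002.10124 — 13 statements merged into one kernel-verified Lean document; each statement's English description precedes it below -/
import Mathlib

section
/- Consider the block matrix C = [[A, B^T], [B, 0]] where A ∈ ℝ^{n×n} and B ∈ ℝ^{m×n}. If B is surjective (its rows are linearly independent) and A is positive definite on the kernel of B (i.e., x^T A x > 0 for all x ∈ ker(B) \ {0}), then C is invertible. -/
open Matrix

theorem stmt_1 (n m : ℕ) (A : Matrix (Fin n) (Fin n) ℝ) (B : Matrix (Fin m) (Fin n) ℝ)
    (hB : LinearIndependent ℝ (fun i => B i))
    (hA : ∀ x : Fin n → ℝ, B.mulVec x = 0 → x ≠ 0 → 0 < x ⬝ᵥ A.mulVec x) :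
    IsUnit (Matrix.fromBlocks A Bᵀ B 0) := by
  rw [Matrix.isUnit_iff_isUnit_det, isUnit_iff_ne_zero]
  intro hdet
  obtain ⟨v, hv, hmv⟩ := (Matrix.exists_mulVec_eq_zero_iff).2 hdet
  set x := v ∘ Sum.inl with hx
  set y := v ∘ Sum.inr with hy
  rw [Matrix.fromBlocks_mulVec] at hmv
  have h1 : A.mulVec x + Bᵀ.mulVec y = 0 := by
    funext i; exact congrFun hmv (Sum.inl i)
  have h2 : B.mulVec x = 0 := by
    funext j
    have := congrFun hmv (Sum.inr j)
    simpa using this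
  have hx0 : x = 0 := by
    by_contra hxne
    have hpos := hA x h2 hxne
    have : x ⬝ᵥ A.mulVec x = - (x ⬝ᵥ Bᵀ.mulVec y) := by
      have : A.mulVec x = - Bᵀ.mulVec y := by
        rw [eq_neg_iff_add_eq_zero]; exact h1
      rw [this, dotProduct_neg]
    rw [this] at hpos
    rw [Matrix.dotProduct_mulVec, Matrix.vecMul_transpose, h2, zero_dotProduct] at hpos
    simp at hpos
  have hBty : Bᵀ.mulVec y = 0 := by
    rw [hx0] at h1
    simpa using h1
  have hy0 : y = 0 := by
    have hsum : ∑ i, y i • B i = 0 := by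
      funext j
      have := congrFun hBty j
      rw [Matrix.mulVec_transpose] at this
      simpa [Matrix.vecMul, dotProduct, Finset.sum_apply, mul_comm] using this
    funext i
    exact Fintype.linearIndependent_iff.1 hB y hsum i
  apply hv
  funext k
  cases k with
  | inl i => exact congrFun hx0 i
  | inr j => exact congrFun hy0 j
end

section
/- The function min: ℝ^n → ℝ, (a_1,...,a_n) ↦ min(a_1,...,a_n), is Newton differentiable of order ∞ on ℝ^n with Newton derivative D min(a) := e_i^T, where i is the smallest index j such that a_j = min(a_1,...,a_n). That is, for every a ∈ ℝ^n there exists ε > 0 such that for all h with ‖h‖ ≤ ε one has min(a+h) − min(a) − D min(a+h)·h = 0. -/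
/-- The minimum of the entries of a vector in `ℝ^(n+1)`. -/
noncomputable def vecMin (n : ℕ) (x : Fin (n + 1) → ℝ) : ℝ :=
  Finset.univ.inf' Finset.univ_nonempty x

theorem stmt_3 (n : ℕ) (idx : (Fin (n + 1) → ℝ) → Fin (n + 1))
    (hval : ∀ x, x (idx x) = vecMin n x)
    (hleast : ∀ x j, x j = vecMin n x → idx x ≤ j) :
    ∀ a : Fin (n + 1) → ℝ, ∃ ε > (0 : ℝ), ∀ h : Fin (n + 1) → ℝ, ‖h‖ ≤ ε →
      vecMin n (a + h) - vecMin n a - h (idx (a + h)) = 0 := by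
  intro a
  set m := vecMin n a with hm
  have hle : ∀ j, m ≤ a j := fun j => Finset.inf'_le _ (Finset.mem_univ j)
  obtain ⟨k, -, hk⟩ := Finset.exists_mem_eq_inf' (Finset.univ_nonempty) a
  have hk' : a k = m := hk.symm
  -- the key computation, given that the argmin of a+h is a minimizer of a
  have finish : ∀ (h : Fin (n + 1) → ℝ), a (idx (a + h)) = m →
      vecMin n (a + h) - vecMin n a - h (idx (a + h)) = 0 := by
    intro h hi
    have h1 : (a + h) (idx (a + h)) = vecMin n (a + h) := hval (a + h)
    have h2 : (a + h) (idx (a + h)) = a (idx (a + h)) + h (idx (a + h)) := rfl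
    rw [← hm, ← h1, h2, hi]
    ring
  -- key estimate: for ‖h‖ ≤ ε, a (idx (a+h)) ≤ m + 2ε
  have est : ∀ (ε : ℝ) (h : Fin (n + 1) → ℝ), ‖h‖ ≤ ε →
      a (idx (a + h)) ≤ m + 2 * ε := by
    intro ε h hh
    set i := idx (a + h)
    have hmin : (a + h) i ≤ (a + h) k := by
      rw [hval (a + h)]
      exact Finset.inf'_le _ (Finset.mem_univ k)
    have hbi : |h i| ≤ ε := le_trans (norm_le_pi_norm h i) hh
    have hbk : |h k| ≤ ε := le_trans (norm_le_pi_norm h k) hh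
    have hbi' := abs_le.mp hbi
    have hbk' := abs_le.mp hbk
    have : a i + h i ≤ a k + h k := hmin
    rw [hk'] at this
    linarith [hbi'.1, hbk'.2]
  by_cases hT : (Finset.univ.filter (fun j => a j ≠ m)).Nonempty
  · set gap := (Finset.univ.filter (fun j => a j ≠ m)).inf' hT (fun j => a j - m)
      with hgapdef
    have hgap : 0 < gap := by
      rw [hgapdef, Finset.lt_inf'_iff]
      intro j hj
      have : a j ≠ m := (Finset.mem_filter.mp hj).2
      have := lt_of_le_of_ne (hle j) (Ne.symm this)
      linarith
    refine ⟨gap / 3, by linarith, ?_⟩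
    intro h hh
    apply finish
    by_contra hne
    have hmem : idx (a + h) ∈ Finset.univ.filter (fun j => a j ≠ m) :=
      Finset.mem_filter.mpr ⟨Finset.mem_univ _, hne⟩
    have hg : gap ≤ a (idx (a + h)) - m := Finset.inf'_le _ hmem
    have := est (gap / 3) h hh
    linarith
  · refine ⟨1, one_pos, ?_⟩
    intro h hh
    apply finish
    by_contra hne
    exact hT ⟨idx (a + h), Finset.mem_filter.mpr ⟨Finset.mem_univ _, hne⟩⟩
end

section
/- Suppose F: ℝ^n → ℝ^n is Newton differentiable on K ⊂ ℝ^n with Newton derivative DF, x̄ ∈ K satisfies F(x̄) = 0, and there are ε > 0 and M > 0 such that DF(x) is invertible with ‖DF(x)^{-1}‖ ≤ M for all x ∈ B_ε(x̄). Then there exists δ > 0 such that for any x_0 ∈ B_δ(x̄), the Newton iteration x_{k+1} = x_k − DF(x_k)^{-1} F(x_k) is well defined and the sequence (x_k) converges superlinearly to x̄, i.e., ‖x_{k+1} − x̄‖ = o(‖x_k − x̄‖). -/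
/-!
Near a root `x̄` the Newton map `g x = x - DF(x)⁻¹ F(x)` satisfies
`g x - x̄ = -DF(x)⁻¹ (F(x) - F(x̄) - DF(x)(x - x̄))`, and Newton differentiability at `x̄` makes
the bracket `o(‖x - x̄‖)`; the uniform bound on `DF(x)⁻¹` gives `g x - x̄ = o(‖x - x̄‖)`.
Hence `g` halves the distance to `x̄` on a small ball, so its iterates converge, and then
the little-o estimate along the iterates is superlinear convergence.
-/

open Asymptotics Filter Metric Set Topology

section ContractionToPoint

variable {X : Type*} [PseudoMetricSpace X] {g : X → X} {xb : X} {q δ : ℝ}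

theorem mapsTo_closedBall_of_dist_le_mul (hq : q ≤ 1)
    (hg : ∀ y ∈ closedBall xb δ, dist (g y) xb ≤ q * dist y xb) :
    MapsTo g (closedBall xb δ) (closedBall xb δ) := fun y hy =>
  mem_closedBall.2 <| (hg y hy).trans <|
    (mul_le_of_le_one_left dist_nonneg hq).trans (mem_closedBall.1 hy)

theorem dist_iterate_le_pow_mul (hq0 : 0 ≤ q) (hq1 : q ≤ 1)
    (hg : ∀ y ∈ closedBall xb δ, dist (g y) xb ≤ q * dist y xb)
    {y : X} (hy : y ∈ closedBall xb δ) (k : ℕ) :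
    dist (g^[k] y) xb ≤ q ^ k * dist y xb := by
  induction k with
  | zero => simp
  | succ k ih =>
    calc dist (g^[k + 1] y) xb = dist (g (g^[k] y)) xb := by
          rw [Function.iterate_succ_apply']
      _ ≤ q * dist (g^[k] y) xb :=
          hg _ ((mapsTo_closedBall_of_dist_le_mul hq1 hg).iterate k hy)
      _ ≤ q * (q ^ k * dist y xb) := mul_le_mul_of_nonneg_left ih hq0
      _ = q ^ (k + 1) * dist y xb := by ring

theorem tendsto_iterate_of_dist_le_mul (hq0 : 0 ≤ q) (hq1 : q < 1)
    (hg : ∀ y ∈ closedBall xb δ, dist (g y) xb ≤ q * dist y xb)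
    {y : X} (hy : y ∈ closedBall xb δ) :
    Tendsto (fun k => g^[k] y) atTop (𝓝 xb) := by
  have hpow : Tendsto (fun k => q ^ k * dist y xb) atTop (𝓝 0) := by
    simpa using (tendsto_pow_atTop_nhds_zero_of_lt_one hq0 hq1).mul_const (dist y xb)
  exact tendsto_iff_dist_tendsto_zero.2 <|
    squeeze_zero (fun _ => dist_nonneg) (dist_iterate_le_pow_mul hq0 hq1.le hg hy) hpow

end ContractionToPoint

section SuperlinearFixedPoint

variable {E : Type*} [SeminormedAddCommGroup E] {g : E → E} {xb : E}

theorem exists_closedBall_dist_le_half_of_isLittleO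
    (hg : (fun y => g y - xb) =o[𝓝 xb] (fun y => y - xb)) {ε : ℝ} (hε : 0 < ε) :
    ∃ δ > 0, δ ≤ ε ∧ ∀ y ∈ closedBall xb δ, dist (g y) xb ≤ 2⁻¹ * dist y xb := by
  obtain ⟨r, hr, hball⟩ := nhds_basis_closedBall.eventually_iff.1 (hg.def (by norm_num : (0 : ℝ) < 2⁻¹))
  refine ⟨min ε r, lt_min hε hr, min_le_left _ _, fun y hy => ?_⟩
  simpa only [dist_eq_norm] using hball (closedBall_subset_closedBall (min_le_right _ _) hy)

theorem exists_forall_ge_norm_iterate_succ_sub_le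
    (hg : (fun y => g y - xb) =o[𝓝 xb] (fun y => y - xb)) {x0 : E}
    (hx : Tendsto (fun k => g^[k] x0) atTop (𝓝 xb)) {c : ℝ} (hc : 0 < c) :
    ∃ N, ∀ k ≥ N, ‖g^[k + 1] x0 - xb‖ ≤ c * ‖g^[k] x0 - xb‖ := by
  obtain ⟨N, hN⟩ := eventually_atTop.1 (hx.eventually (hg.def hc))
  exact ⟨N, fun k hk => by simpa only [Function.iterate_succ_apply'] using hN k hk⟩

end SuperlinearFixedPoint

section NewtonStep

variable {𝕜 E G : Type*} [NontriviallyNormedField 𝕜] [NormedAddCommGroup E] [NormedSpace 𝕜 E]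
  [NormedAddCommGroup G] [NormedSpace 𝕜 G]

theorem newton_step_sub_root {F : E → G} {A : E →L[𝕜] G} {B : G →L[𝕜] E}
    (hBA : B.comp A = ContinuousLinearMap.id 𝕜 E) {xb : E} (hF : F xb = 0) (y : E) :
    y - B (F y) - xb = -B (F y - F xb - A (y - xb)) := by
  have hBAy : B (A (y - xb)) = y - xb := by simpa using DFunLike.congr_fun hBA (y - xb)
  rw [hF, sub_zero, map_sub, hBAy]
  abel

theorem newton_step_apply {F : E → G} {A : E →L[𝕜] G} {B : G →L[𝕜] E}
    (hAB : A.comp B = ContinuousLinearMap.id 𝕜 G) (y : E) :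
    A (y - B (F y) - y) = -F y := by
  have hABy : A (B (F y)) = F y := by simpa using DFunLike.congr_fun hAB (F y)
  rw [sub_sub_cancel_left, map_neg, hABy]

theorem newton_map_sub_isLittleO {F : E → G} {DF : E → E →L[𝕜] G} {B : E → G →L[𝕜] E}
    {xb : E} {M : ℝ}
    (hNewton : (fun h => F (xb + h) - F xb - DF (xb + h) h) =o[𝓝 0] (fun h => h))
    (hF : F xb = 0)
    (hB : ∀ᶠ y in 𝓝 xb, (B y).comp (DF y) = ContinuousLinearMap.id 𝕜 E ∧ ‖B y‖ ≤ M) :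
    (fun y => y - B y (F y) - xb) =o[𝓝 xb] (fun y => y - xb) := by
  have hshift : Tendsto (fun y => y - xb) (𝓝 xb) (𝓝 0) := by
    simpa using (tendsto_id (x := 𝓝 xb)).sub_const xb
  have hrem : (fun y => F y - F xb - DF y (y - xb)) =o[𝓝 xb] (fun y => y - xb) := by
    simpa only [Function.comp_def, add_sub_cancel] using hNewton.comp_tendsto hshift
  refine IsBigO.trans_isLittleO (IsBigO.of_bound M ?_) hrem
  filter_upwards [hB] with y ⟨hBDF, hBM⟩
  rw [newton_step_sub_root hBDF hF, norm_neg]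
  exact (B y).le_of_opNorm_le hBM _

end NewtonStep

theorem stmt_5_general (n : ℕ) (F : (Fin n → ℝ) → Fin n → ℝ)
    (DF : (Fin n → ℝ) → ((Fin n → ℝ) →L[ℝ] (Fin n → ℝ)))
    (K : Set (Fin n → ℝ)) (xb : Fin n → ℝ) (hxbK : xb ∈ K)
    (hNewton : ∀ x ∈ K,
      (fun h => F (x + h) - F x - DF (x + h) h) =o[nhds (0 : Fin n → ℝ)] (fun h => h))
    (hFxb : F xb = 0) (ε M : ℝ) (hε : 0 < ε)
    (hinv : ∀ x ∈ Metric.closedBall xb ε,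
      ∃ B : (Fin n → ℝ) →L[ℝ] (Fin n → ℝ),
        (DF x).comp B = ContinuousLinearMap.id ℝ (Fin n → ℝ) ∧
        B.comp (DF x) = ContinuousLinearMap.id ℝ (Fin n → ℝ) ∧ ‖B‖ ≤ M) :
    ∃ δ > (0 : ℝ), ∀ x0 ∈ Metric.closedBall xb δ,
      ∃ x : ℕ → Fin n → ℝ,
        x 0 = x0 ∧
        (∀ k, DF (x k) (x (k + 1) - x k) = -F (x k)) ∧
        Filter.Tendsto x Filter.atTop (nhds xb) ∧
        ∀ c > (0 : ℝ), ∃ N : ℕ, ∀ k ≥ N, ‖x (k + 1) - xb‖ ≤ c * ‖x k - xb‖ := by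
  choose! B hDFB hBDF hBM using hinv
  set g : (Fin n → ℝ) → Fin n → ℝ := fun y => y - B y (F y)
  have hg : (fun y => g y - xb) =o[𝓝 xb] (fun y => y - xb) :=
    newton_map_sub_isLittleO (hNewton xb hxbK) hFxb <|
      Filter.mem_of_superset (closedBall_mem_nhds xb hε) fun y hy => ⟨hBDF y hy, hBM y hy⟩
  obtain ⟨δ, hδ, hδε, hhalf⟩ := exists_closedBall_dist_le_half_of_isLittleO hg hε
  have htend := fun x0 (hx0 : x0 ∈ closedBall xb δ) =>
    tendsto_iterate_of_dist_le_mul (by norm_num) (by norm_num) hhalf hx0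
  refine ⟨δ, hδ, fun x0 hx0 => ⟨fun k => g^[k] x0, rfl, fun k => ?_, htend x0 hx0,
    fun c hc => exists_forall_ge_norm_iterate_succ_sub_le hg (htend x0 hx0) hc⟩⟩
  have hmem : g^[k] x0 ∈ closedBall xb ε := closedBall_subset_closedBall hδε <|
    (mapsTo_closedBall_of_dist_le_mul (by norm_num) hhalf).iterate k hx0
  simpa only [Function.iterate_succ_apply'] using newton_step_apply (hDFB _ hmem) (g^[k] x0)

theorem stmt_5 (n : ℕ) (F : (Fin n → ℝ) → Fin n → ℝ)
    (DF : (Fin n → ℝ) → ((Fin n → ℝ) →L[ℝ] (Fin n → ℝ)))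
    (K : Set (Fin n → ℝ)) (xb : Fin n → ℝ) (hxbK : xb ∈ K)
    (hNewton : ∀ x ∈ K,
      (fun h => F (x + h) - F x - DF (x + h) h) =o[nhds (0 : Fin n → ℝ)] (fun h => h))
    (hFxb : F xb = 0) (ε M : ℝ) (hε : 0 < ε) (hM : 0 < M)
    (hinv : ∀ x ∈ Metric.closedBall xb ε,
      ∃ B : (Fin n → ℝ) →L[ℝ] (Fin n → ℝ),
        (DF x).comp B = ContinuousLinearMap.id ℝ (Fin n → ℝ) ∧
        B.comp (DF x) = ContinuousLinearMap.id ℝ (Fin n → ℝ) ∧ ‖B‖ ≤ M) :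
    ∃ δ > (0 : ℝ), ∀ x0 ∈ Metric.closedBall xb δ,
      ∃ x : ℕ → Fin n → ℝ,
        x 0 = x0 ∧
        (∀ k, DF (x k) (x (k + 1) - x k) = -F (x k)) ∧
        Filter.Tendsto x Filter.atTop (nhds xb) ∧
        ∀ c > (0 : ℝ), ∃ N : ℕ, ∀ k ≥ N, ‖x (k + 1) - xb‖ ≤ c * ‖x k - xb‖ :=
  stmt_5_general n F DF K xb hxbK hNewton hFxb ε M hε hinv
end

section
/- Suppose F: ℝ^n → ℝ^n is Newton differentiable on {x̄} with Newton derivative DF, F(x̄) = 0, and there are ε, M, K > 0 such that for all x ∈ B_ε(x̄) the matrix DF(x) is invertible with ‖DF(x)^{-1}‖ ≤ M and ‖DF(x)‖ ≤ K. Then there exist constants c, C, δ > 0 such that c‖F(x)‖ ≤ ‖x − x̄‖ ≤ C‖F(x)‖ for all x ∈ B_δ(x̄). -/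
/-!
Write `h = x - x̄`. Newton differentiability says `F x = DF(x) h + r` with `‖r‖ ≤ η ‖h‖`
for any prescribed `η > 0` once `x` is close to `x̄`. The upper bound
`‖F x‖ ≤ (K + η) ‖h‖` is then the triangle inequality, and the uniform bound on `DF(x)⁻¹`
gives `‖h‖ ≤ M ‖DF(x) h‖ ≤ M (‖F x‖ + η ‖h‖)`; with `η = 1 / (2M)` the error term is
absorbed, leaving `‖h‖ ≤ 2M ‖F x‖`.
-/

open Asymptotics Filter Topology

variable {E G : Type*} [NormedAddCommGroup E] [NormedSpace ℝ E]
  [NormedAddCommGroup G] [NormedSpace ℝ G]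

namespace ContinuousLinearMap

theorem norm_le_mul_norm_apply_of_leftInverse {T : E →L[ℝ] G} {B : G →L[ℝ] E}
    (hBT : B.comp T = ContinuousLinearMap.id ℝ E) {M : ℝ} (hB : ‖B‖ ≤ M) (h : E) :
    ‖h‖ ≤ M * ‖T h‖ :=
  calc ‖h‖ = ‖B (T h)‖ := by rw [← comp_apply, hBT, id_apply]
    _ ≤ ‖B‖ * ‖T h‖ := B.le_opNorm _
    _ ≤ M * ‖T h‖ := by gcongr

theorem norm_le_of_norm_sub_apply_le {T : E →L[ℝ] G} {K η : ℝ} (hT : ‖T‖ ≤ K)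
    {y : G} {h : E} (hr : ‖y - T h‖ ≤ η * ‖h‖) : ‖y‖ ≤ (K + η) * ‖h‖ :=
  calc ‖y‖ ≤ ‖T h‖ + ‖y - T h‖ := norm_le_insert' y (T h)
    _ ≤ K * ‖h‖ + η * ‖h‖ := add_le_add (T.le_of_opNorm_le hT h) hr
    _ = (K + η) * ‖h‖ := by ring

theorem norm_le_two_mul_norm_of_norm_sub_apply_le {T : E →L[ℝ] G} {B : G →L[ℝ] E}
    (hBT : B.comp T = ContinuousLinearMap.id ℝ E) {M : ℝ} (hM : 0 < M) (hB : ‖B‖ ≤ M)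
    {y : G} {h : E} (hr : ‖y - T h‖ ≤ 1 / (2 * M) * ‖h‖) :
    ‖h‖ ≤ 2 * M * ‖y‖ := by
  have hTh : ‖T h‖ ≤ ‖y‖ + 1 / (2 * M) * ‖h‖ :=
    (norm_le_insert y (T h)).trans (by gcongr)
  have hmain : ‖h‖ ≤ M * ‖y‖ + ‖h‖ / 2 :=
    calc ‖h‖ ≤ M * ‖T h‖ := norm_le_mul_norm_apply_of_leftInverse hBT hB h
      _ ≤ M * (‖y‖ + 1 / (2 * M) * ‖h‖) := by gcongr
      _ = M * ‖y‖ + ‖h‖ / 2 := by field_simp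
  linarith

end ContinuousLinearMap

theorem eventually_norm_sub_apply_le_of_newton {F : E → G} {DF : E → E →L[ℝ] G} {xb : E}
    (hNewton : (fun h => F (xb + h) - F xb - DF (xb + h) h) =o[𝓝 0] (fun h => h))
    (hFxb : F xb = 0) {η : ℝ} (hη : 0 < η) :
    ∀ᶠ x in 𝓝 xb, ‖F x - DF x (x - xb)‖ ≤ η * ‖x - xb‖ := by
  have hshift : Tendsto (fun x => x - xb) (𝓝 xb) (𝓝 0) :=
    tendsto_sub_nhds_zero_iff.2 tendsto_id
  filter_upwards [(hNewton.comp_tendsto hshift).def hη] with x hx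
  simpa [hFxb] using hx

theorem eventually_newton_two_sided_bound {F : E → G} {DF : E → E →L[ℝ] G} {xb : E}
    (hNewton : (fun h => F (xb + h) - F xb - DF (xb + h) h) =o[𝓝 0] (fun h => h))
    (hFxb : F xb = 0) {M K : ℝ} (hM : 0 < M)
    (hDF : ∀ᶠ x in 𝓝 xb,
      (∃ B : G →L[ℝ] E, B.comp (DF x) = ContinuousLinearMap.id ℝ E ∧ ‖B‖ ≤ M) ∧
        ‖DF x‖ ≤ K) :
    ∀ᶠ x in 𝓝 xb,
      ‖F x‖ ≤ (K + 1 / (2 * M)) * ‖x - xb‖ ∧ ‖x - xb‖ ≤ 2 * M * ‖F x‖ := by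
  filter_upwards [hDF,
      eventually_norm_sub_apply_le_of_newton hNewton hFxb (by positivity : 0 < 1 / (2 * M))]
    with x ⟨⟨B, hBT, hB⟩, hK⟩ hr
  exact ⟨ContinuousLinearMap.norm_le_of_norm_sub_apply_le hK hr,
    ContinuousLinearMap.norm_le_two_mul_norm_of_norm_sub_apply_le hBT hM hB hr⟩

theorem stmt_6 (n : ℕ) (F : (Fin n → ℝ) → Fin n → ℝ)
    (DF : (Fin n → ℝ) → ((Fin n → ℝ) →L[ℝ] (Fin n → ℝ)))
    (xb : Fin n → ℝ)
    (hNewton :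
      (fun h => F (xb + h) - F xb - DF (xb + h) h) =o[nhds (0 : Fin n → ℝ)] (fun h => h))
    (hFxb : F xb = 0) (ε M K : ℝ) (hε : 0 < ε) (hM : 0 < M) (hK : 0 < K)
    (hinv : ∀ x ∈ Metric.closedBall xb ε,
      (∃ B : (Fin n → ℝ) →L[ℝ] (Fin n → ℝ),
        (DF x).comp B = ContinuousLinearMap.id ℝ (Fin n → ℝ) ∧
        B.comp (DF x) = ContinuousLinearMap.id ℝ (Fin n → ℝ) ∧ ‖B‖ ≤ M) ∧ ‖DF x‖ ≤ K) :
    ∃ c > (0 : ℝ), ∃ C > (0 : ℝ), ∃ δ > (0 : ℝ), ∀ x ∈ Metric.closedBall xb δ,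
      c * ‖F x‖ ≤ ‖x - xb‖ ∧ ‖x - xb‖ ≤ C * ‖F x‖ := by
  have hDF : ∀ᶠ x in 𝓝 xb, (∃ B : (Fin n → ℝ) →L[ℝ] (Fin n → ℝ),
      B.comp (DF x) = ContinuousLinearMap.id ℝ (Fin n → ℝ) ∧ ‖B‖ ≤ M) ∧ ‖DF x‖ ≤ K := by
    filter_upwards [Metric.closedBall_mem_nhds xb hε] with x hx
    obtain ⟨⟨B, -, hBT, hB⟩, hK⟩ := hinv x hx
    exact ⟨⟨B, hBT, hB⟩, hK⟩
  obtain ⟨δ, hδ, hbounds⟩ := Metric.nhds_basis_closedBall.eventually_iff.1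
    (eventually_newton_two_sided_bound hNewton hFxb hM hDF)
  have hL : 0 < K + 1 / (2 * M) := by positivity
  refine ⟨1 / (K + 1 / (2 * M)), by positivity, 2 * M, by positivity, δ, hδ, fun x hx => ?_⟩
  obtain ⟨hupper, hlower⟩ := hbounds hx
  refine ⟨?_, hlower⟩
  rw [one_div_mul_eq_div, div_le_iff₀ hL, mul_comm]
  exact hupper
end

section
/- Let f: ℝ^n → ℝ^m be Newton differentiable on K ⊂ ℝ^n with derivative Df, and let g: ℝ^m → ℝ^p be Newton differentiable on f(K) with derivative Dg. Assume Df is bounded on a neighborhood of K and Dg is bounded on a neighborhood of f(K). Then g ∘ f is Newton differentiable on K with derivative x ↦ Dg(f(x)) Df(x). Moreover, if both f and g are Newton differentiable of order α ∈ (0,1], then g ∘ f is Newton differentiable of order α. -/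
open Asymptotics Filter

theorem stmt_7 (n m p : ℕ)
    (f : (Fin n → ℝ) → Fin m → ℝ) (Df : (Fin n → ℝ) → ((Fin n → ℝ) →L[ℝ] (Fin m → ℝ)))
    (g : (Fin m → ℝ) → Fin p → ℝ) (Dg : (Fin m → ℝ) → ((Fin m → ℝ) →L[ℝ] (Fin p → ℝ)))
    (K : Set (Fin n → ℝ))
    (hf : ∀ x ∈ K,
      (fun h => f (x + h) - f x - Df (x + h) h) =o[nhds (0 : Fin n → ℝ)] (fun h => h))
    (hg : ∀ y ∈ f '' K,
      (fun h => g (y + h) - g y - Dg (y + h) h) =o[nhds (0 : Fin m → ℝ)] (fun h => h))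
    (hDf : ∃ U : Set (Fin n → ℝ), IsOpen U ∧ K ⊆ U ∧ ∃ C : ℝ, ∀ x ∈ U, ‖Df x‖ ≤ C)
    (hDg : ∃ V : Set (Fin m → ℝ), IsOpen V ∧ f '' K ⊆ V ∧ ∃ C : ℝ, ∀ y ∈ V, ‖Dg y‖ ≤ C) :
    (∀ x ∈ K,
      (fun h => g (f (x + h)) - g (f x) - ((Dg (f (x + h))).comp (Df (x + h))) h)
        =o[nhds (0 : Fin n → ℝ)] (fun h => h)) ∧
    (∀ α : ℝ, α ∈ Set.Ioc (0 : ℝ) 1 →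
      (∀ x ∈ K, (fun h => f (x + h) - f x - Df (x + h) h)
        =O[nhds (0 : Fin n → ℝ)] (fun h => ‖h‖ ^ (1 + α))) →
      (∀ y ∈ f '' K, (fun h => g (y + h) - g y - Dg (y + h) h)
        =O[nhds (0 : Fin m → ℝ)] (fun h => ‖h‖ ^ (1 + α))) →
      (∀ x ∈ K,
        (fun h => g (f (x + h)) - g (f x) - ((Dg (f (x + h))).comp (Df (x + h))) h)
          =O[nhds (0 : Fin n → ℝ)] (fun h => ‖h‖ ^ (1 + α)))) := by
  obtain ⟨U, hUo, hKU, C, hC⟩ := hDf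
  obtain ⟨V, hVo, hKV, D, hD⟩ := hDg
  -- function identity
  have ident : ∀ (x : Fin n → ℝ) (h : Fin n → ℝ),
      g (f (x + h)) - g (f x) - ((Dg (f (x + h))).comp (Df (x + h))) h =
        (g (f x + (f (x + h) - f x)) - g (f x)
            - Dg (f x + (f (x + h) - f x)) (f (x + h) - f x))
          + Dg (f (x + h)) (f (x + h) - f x - Df (x + h) h) := by
    intro x h
    simp only [add_sub_cancel, ContinuousLinearMap.coe_comp', Function.comp_apply, map_sub]
    abel
  -- common facts for x ∈ K
  have basic : ∀ x ∈ K,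
      ((fun h => f (x + h) - f x) =O[nhds (0 : Fin n → ℝ)] (fun h => h)) ∧
      (∀ᶠ h in nhds (0 : Fin n → ℝ), ‖Dg (f (x + h))‖ ≤ D) := by
    intro x hx
    have hxt : Tendsto (fun h : Fin n → ℝ => x + h) (nhds 0) (nhds x) := by
      simpa using (tendsto_const_nhds.add tendsto_id :
        Tendsto (fun h : Fin n → ℝ => x + h) (nhds 0) (nhds (x + 0)))
    have hU : ∀ᶠ h in nhds (0 : Fin n → ℝ), x + h ∈ U :=
      hxt.eventually (hUo.mem_nhds (hKU hx))
    have hDfO : (fun h => Df (x + h) h) =O[nhds (0 : Fin n → ℝ)] (fun h => h) := by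
      refine IsBigO.of_bound C ?_
      filter_upwards [hU] with h hh
      calc ‖Df (x + h) h‖ ≤ ‖Df (x + h)‖ * ‖h‖ := (Df (x + h)).le_opNorm h
        _ ≤ C * ‖h‖ := mul_le_mul_of_nonneg_right (hC _ hh) (norm_nonneg _)
    have hkO : (fun h => f (x + h) - f x) =O[nhds (0 : Fin n → ℝ)] (fun h => h) := by
      have := (hf x hx).isBigO.add hDfO
      simpa using this
    have hk0 : Tendsto (fun h => f (x + h) - f x) (nhds (0 : Fin n → ℝ)) (nhds 0) :=
      hkO.trans_tendsto tendsto_id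
    have hft : Tendsto (fun h => f (x + h)) (nhds (0 : Fin n → ℝ)) (nhds (f x)) := by
      have := hk0.add_const (f x)
      simpa using this
    have hV : ∀ᶠ h in nhds (0 : Fin n → ℝ), f (x + h) ∈ V :=
      hft.eventually (hVo.mem_nhds (hKV ⟨x, hx, rfl⟩))
    refine ⟨hkO, ?_⟩
    filter_upwards [hV] with h hh using hD _ hh
  constructor
  · intro x hx
    obtain ⟨hkO, hDgb⟩ := basic x hx
    have hk0 : Tendsto (fun h => f (x + h) - f x) (nhds (0 : Fin n → ℝ)) (nhds 0) :=
      hkO.trans_tendsto tendsto_id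
    have hA : (fun h => g (f x + (f (x + h) - f x)) - g (f x)
          - Dg (f x + (f (x + h) - f x)) (f (x + h) - f x))
        =o[nhds (0 : Fin n → ℝ)] (fun h => h) :=
      ((hg (f x) ⟨x, hx, rfl⟩).comp_tendsto hk0).trans_isBigO hkO
    have hB : (fun h => Dg (f (x + h)) (f (x + h) - f x - Df (x + h) h))
        =o[nhds (0 : Fin n → ℝ)] (fun h => h) := by
      refine IsBigO.trans_isLittleO ?_ (hf x hx)
      refine IsBigO.of_bound D ?_
      filter_upwards [hDgb] with h hh
      calc ‖Dg (f (x + h)) (f (x + h) - f x - Df (x + h) h)‖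
          ≤ ‖Dg (f (x + h))‖ * ‖f (x + h) - f x - Df (x + h) h‖ :=
            (Dg (f (x + h))).le_opNorm _
        _ ≤ D * ‖f (x + h) - f x - Df (x + h) h‖ :=
            mul_le_mul_of_nonneg_right hh (norm_nonneg _)
    exact (hA.add hB).congr (fun h => (ident x h).symm) (fun h => rfl)
  · intro α hα hfO hgO x hx
    obtain ⟨hkO, hDgb⟩ := basic x hx
    have hk0 : Tendsto (fun h => f (x + h) - f x) (nhds (0 : Fin n → ℝ)) (nhds 0) :=
      hkO.trans_tendsto tendsto_id
    have h1α : (0 : ℝ) ≤ 1 + α := by linarith [hα.1]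
    obtain ⟨c, hc, hcb⟩ := hkO.exists_pos
    have hcb' : ∀ᶠ h in nhds (0 : Fin n → ℝ), ‖f (x + h) - f x‖ ≤ c * ‖h‖ := by
      have := hcb.bound
      simpa using this
    have hpow : (fun h => ‖f (x + h) - f x‖ ^ (1 + α))
        =O[nhds (0 : Fin n → ℝ)] (fun h => ‖h‖ ^ (1 + α)) := by
      refine IsBigO.of_bound (c ^ (1 + α)) ?_
      filter_upwards [hcb'] with h hh
      rw [Real.norm_of_nonneg (Real.rpow_nonneg (norm_nonneg _) _),
        Real.norm_of_nonneg (Real.rpow_nonneg (norm_nonneg _) _), ← Real.mul_rpow hc.le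
          (norm_nonneg _)]
      exact Real.rpow_le_rpow (norm_nonneg _) hh h1α
    have hA : (fun h => g (f x + (f (x + h) - f x)) - g (f x)
          - Dg (f x + (f (x + h) - f x)) (f (x + h) - f x))
        =O[nhds (0 : Fin n → ℝ)] (fun h => ‖h‖ ^ (1 + α)) :=
      ((hgO (f x) ⟨x, hx, rfl⟩).comp_tendsto hk0).trans hpow
    have hB : (fun h => Dg (f (x + h)) (f (x + h) - f x - Df (x + h) h))
        =O[nhds (0 : Fin n → ℝ)] (fun h => ‖h‖ ^ (1 + α)) := by
      refine IsBigO.trans ?_ (hfO x hx)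
      refine IsBigO.of_bound D ?_
      filter_upwards [hDgb] with h hh
      calc ‖Dg (f (x + h)) (f (x + h) - f x - Df (x + h) h)‖
          ≤ ‖Dg (f (x + h))‖ * ‖f (x + h) - f x - Df (x + h) h‖ :=
            (Dg (f (x + h))).le_opNorm _
        _ ≤ D * ‖f (x + h) - f x - Df (x + h) h‖ :=
            mul_le_mul_of_nonneg_right hh (norm_nonneg _)
    exact (hA.add hB).congr (fun h => (ident x h).symm) (fun h => rfl)
end

section
/- Define ψ_1(a,b,μ,ν) = max(−a, |b|, |μ|), ψ_2(a,b,μ,ν) = max(−b, |a|, |ν|), ψ_3(a,b,μ,ν) = max(|a|, |b|, μ, ν), and φ_1 = min(ψ_1, ψ_2, ψ_3). Then for all (a,b,μ,ν) ∈ ℝ^4: φ_1(a,b,μ,ν) = 0 if and only if (a,b,μ,ν) ∈ M, where M = {(a,b,μ,ν) | a ≥ 0, b ≥ 0, ab = 0, aμ = 0, bν = 0, and (μν = 0 or (μ < 0 and ν < 0))}. -/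
noncomputable def psi1 (a b mu _nu : ℝ) : ℝ := max (-a) (max |b| |mu|)
noncomputable def psi2 (a b _mu nu : ℝ) : ℝ := max (-b) (max |a| |nu|)
noncomputable def psi3 (a b mu nu : ℝ) : ℝ := max |a| (max |b| (max mu nu))
noncomputable def phi1 (a b mu nu : ℝ) : ℝ :=
  min (psi1 a b mu nu) (min (psi2 a b mu nu) (psi3 a b mu nu))

theorem stmt_9 (a b mu nu : ℝ) :
    phi1 a b mu nu = 0 ↔
      (0 ≤ a ∧ 0 ≤ b ∧ a * b = 0 ∧ a * mu = 0 ∧ b * nu = 0 ∧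
        (mu * nu = 0 ∨ (mu < 0 ∧ nu < 0))) := by
  have h1 : psi1 a b mu nu = 0 ↔ 0 ≤ a ∧ b = 0 ∧ mu = 0 := by
    unfold psi1
    constructor
    · intro h
      have hb : |b| ≤ 0 := by
        have := le_max_left |b| |mu|; have := le_max_right (-a) (max |b| |mu|); linarith
      have hm : |mu| ≤ 0 := by
        have := le_max_right |b| |mu|; have := le_max_right (-a) (max |b| |mu|); linarith
      have ha : -a ≤ 0 := by
        have := le_max_left (-a) (max |b| |mu|); linarith
      refine ⟨by linarith, abs_nonpos_iff.mp hb, abs_nonpos_iff.mp hm⟩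
    · rintro ⟨ha, hb, hm⟩
      subst hb; subst hm; simp [max_eq_iff, abs_of_nonneg, le_abs]; linarith
  have h2 : psi2 a b mu nu = 0 ↔ 0 ≤ b ∧ a = 0 ∧ nu = 0 := by
    unfold psi2
    constructor
    · intro h
      have hb : |a| ≤ 0 := by
        have := le_max_left |a| |nu|; have := le_max_right (-b) (max |a| |nu|); linarith
      have hm : |nu| ≤ 0 := by
        have := le_max_right |a| |nu|; have := le_max_right (-b) (max |a| |nu|); linarith
      have ha : -b ≤ 0 := by
        have := le_max_left (-b) (max |a| |nu|); linarith
      refine ⟨by linarith, abs_nonpos_iff.mp hb, abs_nonpos_iff.mp hm⟩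
    · rintro ⟨ha, hb, hm⟩
      subst hb; subst hm; simp [max_eq_iff, abs_of_nonneg, le_abs]; linarith
  have h3 : psi3 a b mu nu = 0 ↔ a = 0 ∧ b = 0 ∧ mu ≤ 0 ∧ nu ≤ 0 := by
    unfold psi3
    constructor
    · intro h
      have ha : |a| ≤ 0 := by
        have := le_max_left |a| (max |b| (max mu nu)); linarith
      have hb : |b| ≤ 0 := by
        have h1 := le_max_left |b| (max mu nu)
        have := le_max_right |a| (max |b| (max mu nu)); linarith
      have hm : max mu nu ≤ 0 := by
        have h1 := le_max_right |b| (max mu nu)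
        have := le_max_right |a| (max |b| (max mu nu)); linarith
      exact ⟨abs_nonpos_iff.mp ha, abs_nonpos_iff.mp hb,
        le_trans (le_max_left mu nu) hm, le_trans (le_max_right mu nu) hm⟩
    · rintro ⟨ha, hb, hm, hn⟩
      subst ha; subst hb; simp [max_eq_iff]; exact ⟨hm, hn⟩
  have n1 : 0 ≤ psi1 a b mu nu :=
    le_trans (abs_nonneg b) (le_trans (le_max_left _ _) (le_max_right _ _))
  have n2 : 0 ≤ psi2 a b mu nu :=
    le_trans (abs_nonneg a) (le_trans (le_max_left _ _) (le_max_right _ _))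
  have n3 : 0 ≤ psi3 a b mu nu := le_trans (abs_nonneg a) (le_max_left _ _)
  constructor
  · intro h
    have hz : psi1 a b mu nu = 0 ∨ psi2 a b mu nu = 0 ∨ psi3 a b mu nu = 0 := by
      unfold phi1 at h
      rcases min_cases (psi1 a b mu nu) (min (psi2 a b mu nu) (psi3 a b mu nu)) with
        ⟨he, _⟩ | ⟨he, _⟩
      · left; linarith
      · rcases min_cases (psi2 a b mu nu) (psi3 a b mu nu) with ⟨he2, _⟩ | ⟨he2, _⟩
        · right; left; linarith
        · right; right; linarith
    rcases hz with hz | hz | hz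
    · obtain ⟨ha, hb, hm⟩ := h1.mp hz
      subst hb; subst hm
      exact ⟨ha, le_refl 0, by ring, by ring, by ring, Or.inl (by ring)⟩
    · obtain ⟨hb, ha, hn⟩ := h2.mp hz
      subst ha; subst hn
      exact ⟨le_refl 0, hb, by ring, by ring, by ring, Or.inl (by ring)⟩
    · obtain ⟨ha, hb, hm, hn⟩ := h3.mp hz
      subst ha; subst hb
      refine ⟨le_refl 0, le_refl 0, by ring, by ring, by ring, ?_⟩
      rcases hm.lt_or_eq with hm' | hm'
      · rcases hn.lt_or_eq with hn' | hn'
        · exact Or.inr ⟨hm', hn'⟩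
        · exact Or.inl (by simp [hn'])
      · exact Or.inl (by simp [hm'])
  · rintro ⟨ha, hb, hab, ham, hbn, hc⟩
    have key : psi1 a b mu nu = 0 ∨ psi2 a b mu nu = 0 ∨ psi3 a b mu nu = 0 := by
      rcases mul_eq_zero.mp hab with h0 | h0
      · rcases mul_eq_zero.mp hbn with h0' | h0'
        · rcases hc with hc | hc
          · rcases mul_eq_zero.mp hc with h0'' | h0''
            · exact Or.inl (h1.mpr ⟨ha, h0', h0''⟩)
            · exact Or.inr (Or.inl (h2.mpr ⟨hb, h0, h0''⟩))
          · exact Or.inr (Or.inr (h3.mpr ⟨h0, h0', hc.1.le, hc.2.le⟩))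
        · exact Or.inr (Or.inl (h2.mpr ⟨hb, h0, h0'⟩))
      · rcases mul_eq_zero.mp ham with h0' | h0'
        · rcases mul_eq_zero.mp hbn with h0'' | h0''
          · rcases hc with hc | hc
            · rcases mul_eq_zero.mp hc with h3' | h3'
              · exact Or.inl (h1.mpr ⟨ha, h0'', h3'⟩)
              · exact Or.inr (Or.inl (h2.mpr ⟨hb, h0', h3'⟩))
            · exact Or.inr (Or.inr (h3.mpr ⟨h0', h0'', hc.1.le, hc.2.le⟩))
          · exact Or.inr (Or.inl (h2.mpr ⟨hb, h0', h0''⟩))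
        · exact Or.inl (h1.mpr ⟨ha, h0, h0'⟩)
    unfold phi1
    rcases key with hz | hz | hz
    · have hle : min (psi1 a b mu nu) (min (psi2 a b mu nu) (psi3 a b mu nu)) ≤ 0 := by
        rw [← hz]; exact min_le_left _ _
      have hge : 0 ≤ min (psi1 a b mu nu) (min (psi2 a b mu nu) (psi3 a b mu nu)) :=
        le_min n1 (le_min n2 n3)
      linarith
    · have hle : min (psi1 a b mu nu) (min (psi2 a b mu nu) (psi3 a b mu nu)) ≤ 0 := by
        rw [← hz]; exact le_trans (min_le_right _ _) (min_le_left _ _)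
      have hge : 0 ≤ min (psi1 a b mu nu) (min (psi2 a b mu nu) (psi3 a b mu nu)) :=
        le_min n1 (le_min n2 n3)
      linarith
    · have hle : min (psi1 a b mu nu) (min (psi2 a b mu nu) (psi3 a b mu nu)) ≤ 0 := by
        rw [← hz]; exact le_trans (min_le_right _ _) (min_le_right _ _)
      have hge : 0 ≤ min (psi1 a b mu nu) (min (psi2 a b mu nu) (psi3 a b mu nu)) :=
        le_min n1 (le_min n2 n3)
      linarith
end

section
/- With ψ_1(a,b,μ,ν) = max(−a, |b|, |μ|), ψ_2(a,b,μ,ν) = max(−b, |a|, |ν|), ψ_3(a,b,μ,ν) = max(|a|, |b|, μ, ν) and φ_1 = min(ψ_1, ψ_2, ψ_3): for every w ∈ ℝ^4, φ_1(w) equals the distance of w to the set M in the ℓ^∞-norm, i.e., φ_1(w) = inf{‖w − m‖_∞ | m ∈ M}. -/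
/-- The M-stationarity set for a single complementarity pair.
The product `ℝ × ℝ × ℝ × ℝ` carries the sup (`ℓ^∞`) norm, so `Metric.infDist`
is the `ℓ^∞`-distance. -/
def Mstat : Set (ℝ × ℝ × ℝ × ℝ) :=
  {w | 0 ≤ w.1 ∧ 0 ≤ w.2.1 ∧ w.1 * w.2.1 = 0 ∧ w.1 * w.2.2.1 = 0 ∧ w.2.1 * w.2.2.2 = 0 ∧
    (w.2.2.1 * w.2.2.2 = 0 ∨ (w.2.2.1 < 0 ∧ w.2.2.2 < 0))}

private lemma dist4 (a b c d a' b' c' d' : ℝ) :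
    dist ((a,b,c,d) : ℝ×ℝ×ℝ×ℝ) (a',b',c',d') =
      max |a-a'| (max |b-b'| (max |c-c'| |d-d'|)) := by
  simp [Prod.dist_eq, Real.dist_eq]

theorem stmt_10 (w : ℝ × ℝ × ℝ × ℝ) :
    phi1 w.1 w.2.1 w.2.2.1 w.2.2.2 = Metric.infDist w Mstat := by
  obtain ⟨a, b, mu, nu⟩ := w
  have hne : Mstat.Nonempty := ⟨(0,0,0,0), by simp [Mstat]⟩
  apply le_antisymm
  · rw [← not_lt, Metric.infDist_lt_iff hne]
    push_neg
    rintro ⟨a', b', mu', nu'⟩ ⟨ha', hb', hab, hamu, hbnu, hor⟩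
    rw [dist4]
    set D := max |a-a'| (max |b-b'| (max |mu-mu'| |nu-nu'|)) with hD
    have hd1 : |a-a'| ≤ D := le_max_left _ _
    have hd2 : |b-b'| ≤ D := (le_max_left _ _).trans (le_max_right _ _)
    have hd3 : |mu-mu'| ≤ D :=
      ((le_max_left _ _).trans (le_max_right _ _)).trans (le_max_right _ _)
    have hd4 : |nu-nu'| ≤ D :=
      ((le_max_right _ _).trans (le_max_right _ _)).trans (le_max_right _ _)
    have c1 : b' = 0 → mu' = 0 → phi1 a b mu nu ≤ D := by
      intro h1 h2
      refine min_le_of_left_le ?_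
      subst h1 h2
      refine max_le ?_ (max_le ?_ ?_)
      · have := abs_le.mp (le_refl |a - a'|) |>.1
        linarith [neg_abs_le (a - a'), ha']
      · simpa using hd2
      · simpa using hd3
    have c2 : a' = 0 → nu' = 0 → phi1 a b mu nu ≤ D := by
      intro h1 h2
      refine min_le_of_right_le (min_le_of_left_le ?_)
      subst h1 h2
      refine max_le ?_ (max_le ?_ ?_)
      · linarith [neg_abs_le (b - b'), hb']
      · simpa using hd1
      · simpa using hd4
    have c3 : a' = 0 → b' = 0 → mu' ≤ 0 → nu' ≤ 0 → phi1 a b mu nu ≤ D := by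
      intro h1 h2 h3 h4
      refine min_le_of_right_le (min_le_of_right_le ?_)
      subst h1 h2
      refine max_le ?_ (max_le ?_ (max_le ?_ ?_))
      · simpa using hd1
      · simpa using hd2
      · linarith [le_abs_self (mu - mu')]
      · linarith [le_abs_self (nu - nu')]
    rcases mul_eq_zero.mp hab with ha0 | hb0
    · -- a' = 0
      rcases mul_eq_zero.mp hbnu with hb0 | hn0
      · -- b' = 0 too
        rcases hor with h | ⟨hm, hn⟩
        · rcases mul_eq_zero.mp h with hm0 | hn0
          · exact c1 hb0 hm0
          · exact c2 ha0 hn0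
        · exact c3 ha0 hb0 hm.le hn.le
      · exact c2 ha0 hn0
    · -- b' = 0
      rcases mul_eq_zero.mp hamu with ha0 | hm0
      · rcases hor with h | ⟨hm, hn⟩
        · rcases mul_eq_zero.mp h with hm0 | hn0
          · exact c1 hb0 hm0
          · exact c2 ha0 hn0
        · exact c3 ha0 hb0 hm.le hn.le
      · exact c1 hb0 hm0
  · refine le_min ?_ (le_min ?_ ?_)
    · -- infDist ≤ psi1, point (max a 0, 0, 0, nu)
      have hmem : ((max a 0, 0, 0, nu) : ℝ×ℝ×ℝ×ℝ) ∈ Mstat := by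
        refine ⟨le_max_right _ _, le_refl 0, by ring, by ring, by ring, Or.inl (by ring)⟩
      refine (Metric.infDist_le_dist_of_mem hmem).trans ?_
      rw [dist4]
      simp only [psi1, sub_zero, sub_self, abs_zero]
      refine max_le ?_ (max_le ?_ ?_)
      · rcases le_total a 0 with h | h
        · rw [max_eq_right h, sub_zero, abs_of_nonpos h]
          exact le_max_left _ _
        · rw [max_eq_left h, sub_self, abs_zero]
          exact le_max_of_le_right ((abs_nonneg b).trans (le_max_left _ _))
      · exact le_max_of_le_right (le_max_left _ _)
      · refine max_le (le_max_of_le_right (le_max_right _ _)) ?_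
        exact le_max_of_le_right ((abs_nonneg mu).trans (le_max_right _ _))
    · -- infDist ≤ psi2, point (0, max b 0, mu, 0)
      have hmem : ((0, max b 0, mu, 0) : ℝ×ℝ×ℝ×ℝ) ∈ Mstat := by
        refine ⟨le_refl 0, le_max_right _ _, by ring, by ring, by ring, Or.inl (by ring)⟩
      refine (Metric.infDist_le_dist_of_mem hmem).trans ?_
      rw [dist4]
      simp only [psi2, sub_zero, sub_self, abs_zero]
      refine max_le ?_ (max_le ?_ ?_)
      · exact le_max_of_le_right (le_max_left _ _)
      · rcases le_total b 0 with h | h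
        · rw [max_eq_right h, sub_zero, abs_of_nonpos h]
          exact le_max_left _ _
        · rw [max_eq_left h, sub_self, abs_zero]
          exact le_max_of_le_right ((abs_nonneg a).trans (le_max_left _ _))
      · refine max_le ?_ (le_max_of_le_right (le_max_right _ _))
        exact le_max_of_le_right ((abs_nonneg nu).trans (le_max_right _ _))
    · -- infDist ≤ psi3, point (0, 0, min mu 0, min nu 0)
      have hmem : ((0, 0, min mu 0, min nu 0) : ℝ×ℝ×ℝ×ℝ) ∈ Mstat := by
        refine ⟨le_refl 0, le_refl 0, by ring, by ring, by ring, ?_⟩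
        rcases le_total mu 0 with hm | hm
        · rcases le_total nu 0 with hn | hn
          · rcases eq_or_lt_of_le hm with hm0 | hm0
            · exact Or.inl (by simp [min_eq_left hm, hm0])
            · rcases eq_or_lt_of_le hn with hn0 | hn0
              · exact Or.inl (by simp [min_eq_left hn, hn0])
              · exact Or.inr ⟨by simp [min_eq_left hm, hm0], by simp [min_eq_left hn, hn0]⟩
          · exact Or.inl (by simp [min_eq_right hn])
        · exact Or.inl (by simp [min_eq_right hm])
      refine (Metric.infDist_le_dist_of_mem hmem).trans ?_
      rw [dist4]
      simp only [psi3, sub_zero]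
      have habs : 0 ≤ max |a| (max |b| (max mu nu)) :=
        le_trans (abs_nonneg a) (le_max_left _ _)
      refine max_le (le_max_left _ _) (max_le (le_max_of_le_right (le_max_left _ _)) (max_le ?_ ?_))
      · rcases le_total mu 0 with h | h
        · rw [min_eq_left h, sub_self, abs_zero]; exact habs
        · rw [min_eq_right h, sub_zero, abs_of_nonneg h]
          exact le_max_of_le_right (le_max_of_le_right (le_max_left _ _))
      · rcases le_total nu 0 with h | h
        · rw [min_eq_left h, sub_self, abs_zero]; exact habs
        · rw [min_eq_right h, sub_zero, abs_of_nonneg h]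
          exact le_max_of_le_right (le_max_of_le_right (le_max_right _ _))
end

section
/- Define θ_1(a,b,μ,ν) = |min(a,b)|, θ_2(a,b,μ,ν) = min(|a|,|μ|), θ_3(a,b,μ,ν) = min(|b|,|ν|), θ_4(a,b,μ,ν) = max(0, min(μ,|ν|), min(ν,|μ|)), and ψ_1 = max(−a,|b|,|μ|), ψ_2 = max(−b,|a|,|ν|), ψ_3 = max(|a|,|b|,μ,ν). Then for all (a,b,μ,ν) ∈ ℝ^4: max(θ_1, θ_2, θ_3, θ_4)(a,b,μ,ν) = min(ψ_1, ψ_2, ψ_3)(a,b,μ,ν). -/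
noncomputable def theta1 (a b _mu _nu : ℝ) : ℝ := |min a b|
noncomputable def theta2 (a _b mu _nu : ℝ) : ℝ := min |a| |mu|
noncomputable def theta3 (_a b _mu nu : ℝ) : ℝ := min |b| |nu|
noncomputable def theta4 (_a _b mu nu : ℝ) : ℝ := max 0 (max (min mu |nu|) (min nu |mu|))

theorem stmt_12 (a b mu nu : ℝ) :
    max (theta1 a b mu nu) (max (theta2 a b mu nu) (max (theta3 a b mu nu) (theta4 a b mu nu)))
      = min (psi1 a b mu nu) (min (psi2 a b mu nu) (psi3 a b mu nu)) := by
  unfold theta1 theta2 theta3 theta4 psi1 psi2 psi3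
  apply le_antisymm
  · refine le_min (max_le ?_ (max_le ?_ (max_le ?_ ?_)))
      (le_min (max_le ?_ (max_le ?_ (max_le ?_ ?_)))
        (max_le ?_ (max_le ?_ (max_le ?_ ?_))))
    · -- θ1 ≤ ψ1
      rcases le_total a b with h | h
      · rcases le_total 0 a with ha | ha
        · rw [min_eq_left h, abs_of_nonneg ha]
          exact (h.trans (le_abs_self b)).trans ((le_max_left _ _).trans (le_max_right _ _))
        · rw [min_eq_left h, abs_of_nonpos ha]; exact le_max_left _ _
      · rw [min_eq_right h]
        exact (le_max_left _ _).trans (le_max_right _ _)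
    · exact (min_le_right _ _).trans ((le_max_right _ _).trans (le_max_right _ _))
    · exact (min_le_left _ _).trans ((le_max_left _ _).trans (le_max_right _ _))
    · refine max_le ((abs_nonneg b).trans ((le_max_left _ _).trans (le_max_right _ _)))
        (max_le ?_ ?_)
      · exact ((min_le_left _ _).trans (le_abs_self mu)).trans
          ((le_max_right _ _).trans (le_max_right _ _))
      · exact (min_le_right _ _).trans ((le_max_right _ _).trans (le_max_right _ _))
    · -- θ1 ≤ ψ2
      rcases le_total b a with h | h
      · rcases le_total 0 b with hb | hb
        · rw [min_eq_right h, abs_of_nonneg hb]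
          exact (h.trans (le_abs_self a)).trans ((le_max_left _ _).trans (le_max_right _ _))
        · rw [min_eq_right h, abs_of_nonpos hb]; exact le_max_left _ _
      · rw [min_eq_left h]
        exact (le_max_left _ _).trans (le_max_right _ _)
    · exact (min_le_left _ _).trans ((le_max_left _ _).trans (le_max_right _ _))
    · exact (min_le_right _ _).trans ((le_max_right _ _).trans (le_max_right _ _))
    · refine max_le ((abs_nonneg a).trans ((le_max_left _ _).trans (le_max_right _ _)))
        (max_le ?_ ?_)
      · exact (min_le_right _ _).trans ((le_max_right _ _).trans (le_max_right _ _))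
      · exact ((min_le_left _ _).trans (le_abs_self nu)).trans
          ((le_max_right _ _).trans (le_max_right _ _))
    · -- θ1 ≤ ψ3
      rcases le_total a b with h | h
      · rw [min_eq_left h]; exact le_max_left _ _
      · rw [min_eq_right h]; exact (le_max_left _ _).trans (le_max_right _ _)
    · exact (min_le_left _ _).trans (le_max_left _ _)
    · exact (min_le_left _ _).trans ((le_max_left _ _).trans (le_max_right _ _))
    · refine max_le ((abs_nonneg a).trans (le_max_left _ _)) (max_le ?_ ?_)
      · exact (min_le_left _ _).trans ((le_max_left _ _).trans
          ((le_max_right _ _).trans (le_max_right _ _)))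
      · exact (min_le_left _ _).trans ((le_max_right _ _).trans
          ((le_max_right _ _).trans (le_max_right _ _)))
  · set T := max |min a b| (max (min |a| |mu|) (max (min |b| |nu|)
      (max 0 (max (min mu |nu|) (min nu |mu|))))) with hT
    have h1 : |min a b| ≤ T := le_max_left _ _
    have h2 : min |a| |mu| ≤ T := le_trans (le_max_left _ _) (le_max_right _ _)
    have h3 : min |b| |nu| ≤ T :=
      le_trans (le_trans (le_max_left _ _) (le_max_right _ _)) (le_max_right _ _)
    have h4 : max 0 (max (min mu |nu|) (min nu |mu|)) ≤ T :=
      le_trans (le_trans (le_max_right _ _) (le_max_right _ _)) (le_max_right _ _)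
    have h0 : (0:ℝ) ≤ T := le_trans (le_max_left _ _) h4
    have m1 : min mu |nu| ≤ T := le_trans (le_trans (le_max_left _ _) (le_max_right _ _)) h4
    have m2 : min nu |mu| ≤ T := le_trans (le_trans (le_max_right _ _) (le_max_right _ _)) h4
    have hna : -a ≤ T := by
      have := neg_le_abs (min a b)
      have := min_le_left a b
      linarith
    have hnb : -b ≤ T := by
      have := neg_le_abs (min a b)
      have := min_le_right a b
      linarith
    rcases lt_or_ge T |a| with hA | hA
    · -- |a| > T : use psi1
      have haT : T < a := by
        rcases abs_cases a with ⟨e, _⟩ | ⟨e, _⟩ <;> linarith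
      have hbT : |b| ≤ T := by
        rcases le_total a b with h | h
        · exfalso; rw [min_eq_left h, abs_of_nonneg (by linarith : (0:ℝ) ≤ a)] at h1; linarith
        · rw [min_eq_right h] at h1; exact h1
      have hmT : |mu| ≤ T := by
        rcases min_le_iff.mp h2 with h | h
        · linarith
        · exact h
      exact min_le_of_left_le (max_le (by linarith) (max_le hbT hmT))
    · rcases lt_or_ge T |b| with hB | hB
      · -- |b| > T : use psi2
        have hbT : T < b := by
          rcases abs_cases b with ⟨e, _⟩ | ⟨e, _⟩ <;> linarith
        have haT : |a| ≤ T := by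
          rcases le_total b a with h | h
          · exfalso; rw [min_eq_right h, abs_of_nonneg (by linarith : (0:ℝ) ≤ b)] at h1; linarith
          · rw [min_eq_left h] at h1; exact h1
        have hnT : |nu| ≤ T := by
          rcases min_le_iff.mp h3 with h | h
          · linarith
          · exact h
        exact min_le_of_right_le (min_le_of_left_le
          (max_le (by linarith) (max_le haT hnT)))
      · rcases le_or_gt mu T with hm | hm
        · rcases le_or_gt nu T with hn | hn
          · -- psi3
            exact min_le_of_right_le (min_le_of_right_le
              (max_le hA (max_le hB (max_le hm hn))))
          · -- nu > T : use psi1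
            have hmu : |mu| ≤ T := by
              rcases min_le_iff.mp m2 with h | h
              · linarith
              · exact h
            exact min_le_of_left_le (max_le (by linarith [neg_le_abs a, abs_le.mp hA])
              (max_le hB hmu))
        · -- mu > T : use psi2
          have hnu : |nu| ≤ T := by
            rcases min_le_iff.mp m1 with h | h
            · linarith
            · exact h
          exact min_le_of_right_le (min_le_of_left_le
            (max_le (by linarith [abs_le.mp hB]) (max_le hA hnu)))
end

section
/- Define θ_1(a,b,μ,ν) = |min(a,b)|, θ_2(a,b,μ,ν) = min(|a|,|μ|), θ_3(a,b,μ,ν) = min(|b|,|ν|), θ_4(a,b,μ,ν) = max(0, min(μ,|ν|), min(ν,|μ|)), and θ = max(θ_1,θ_2,θ_3,θ_4). Then θ(a,b,μ,ν) = 0 if and only if (a,b,μ,ν) ∈ M = {(a,b,μ,ν) | a ≥ 0, b ≥ 0, ab = 0, aμ = 0, bν = 0, and (μν = 0 or (μ < 0 and ν < 0))}. -/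
noncomputable def theta (a b mu nu : ℝ) : ℝ :=
  max (theta1 a b mu nu) (max (theta2 a b mu nu) (max (theta3 a b mu nu) (theta4 a b mu nu)))

theorem stmt_13 (a b mu nu : ℝ) :
    theta a b mu nu = 0 ↔
      (0 ≤ a ∧ 0 ≤ b ∧ a * b = 0 ∧ a * mu = 0 ∧ b * nu = 0 ∧
        (mu * nu = 0 ∨ (mu < 0 ∧ nu < 0))) := by
  have hnn : 0 ≤ theta a b mu nu := by
    simp only [theta, theta1]
    exact le_max_of_le_left (abs_nonneg _)
  rw [show (theta a b mu nu = 0 ↔ theta a b mu nu ≤ 0) from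
    ⟨fun h => h.le, fun h => le_antisymm h hnn⟩]
  simp only [theta, theta1, theta2, theta3, theta4, max_le_iff, min_le_iff,
    abs_nonpos_iff, le_refl, true_and]
  constructor
  · rintro ⟨h1, h2, h3, h4, h5⟩
    have ha : 0 ≤ a := h1 ▸ min_le_left a b
    have hb : 0 ≤ b := h1 ▸ min_le_right a b
    refine ⟨ha, hb, ?_, ?_, ?_, ?_⟩
    · rcases min_cases a b with ⟨h, _⟩ | ⟨h, _⟩
      · rw [h.symm.trans h1, zero_mul]
      · rw [h.symm.trans h1, mul_zero]
    · rcases h2 with h | h <;> simp [h]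
    · rcases h3 with h | h <;> simp [h]
    · rcases h4 with h4 | h4
      · rcases h5 with h5 | h5
        · rcases lt_or_eq_of_le h4 with hμ | hμ
          · rcases lt_or_eq_of_le h5 with hν | hν
            · exact Or.inr ⟨hμ, hν⟩
            · exact Or.inl (by rw [hν, mul_zero])
          · exact Or.inl (by rw [hμ, zero_mul])
        · exact Or.inl (by rw [h5, zero_mul])
      · exact Or.inl (by rw [h4, mul_zero])
  · rintro ⟨ha, hb, hab, hamu, hbnu, hlast⟩
    refine ⟨?_, ?_, ?_, ?_, ?_⟩
    · rcases mul_eq_zero.mp hab with h | h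
      · simp [min_eq_left, h, hb]
      · simp [min_eq_right, h, ha]
    · exact mul_eq_zero.mp hamu
    · exact mul_eq_zero.mp hbnu
    · rcases hlast with h | ⟨h1, h2⟩
      · rcases mul_eq_zero.mp h with h | h
        · exact Or.inl h.le
        · exact Or.inr h
      · exact Or.inl h1.le
    · rcases hlast with h | ⟨h1, h2⟩
      · rcases mul_eq_zero.mp h with h | h
        · exact Or.inr h
        · exact Or.inl h.le
      · exact Or.inl h2.le
end

section
/- Let π_min(a,b) = min(a,b) and π_FB(a,b) = √(a²+b²) − a − b. Then for all (a,b) ∈ ℝ²: (2/(2+√2))·|π_min(a,b)| ≤ |π_FB(a,b)| ≤ (2+√2)·|π_min(a,b)|. -/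
noncomputable def piFB (a b : ℝ) : ℝ := Real.sqrt (a ^ 2 + b ^ 2) - a - b

lemma two_div_eq : 2 / (2 + Real.sqrt 2) = 2 - Real.sqrt 2 := by
  have h : Real.sqrt 2 ^ 2 = 2 := Real.sq_sqrt (by norm_num)
  have h0 : (0:ℝ) ≤ Real.sqrt 2 := Real.sqrt_nonneg 2
  rw [div_eq_iff (by positivity)]
  nlinarith

lemma key_le (a b : ℝ) (hab : a ≤ b) :
    (2 - Real.sqrt 2) * |a| ≤ |piFB a b| ∧ |piFB a b| ≤ (2 + Real.sqrt 2) * |a| := by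
  have hs0 : 0 ≤ Real.sqrt (a ^ 2 + b ^ 2) := Real.sqrt_nonneg _
  have hs2 : Real.sqrt (a ^ 2 + b ^ 2) ^ 2 = a ^ 2 + b ^ 2 := Real.sq_sqrt (by positivity)
  set s := Real.sqrt (a ^ 2 + b ^ 2) with hsdef
  have hbs : b ≤ s := by
    calc b ≤ |b| := le_abs_self b
    _ = Real.sqrt (b ^ 2) := (Real.sqrt_sq_eq_abs b).symm
    _ ≤ s := Real.sqrt_le_sqrt (by nlinarith [sq_nonneg a])
  have hr2 : Real.sqrt 2 ^ 2 = 2 := Real.sq_sqrt (by norm_num)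
  have hr0 : (0:ℝ) ≤ Real.sqrt 2 := Real.sqrt_nonneg 2
  have hr1 : 1 ≤ Real.sqrt 2 := by nlinarith
  set r := Real.sqrt 2 with hrdef
  have hpi : piFB a b = s - a - b := rfl
  rcases le_or_gt 0 a with ha | ha
  · have hsab : s ≤ a + b := by nlinarith [mul_nonneg ha (ha.trans hab)]
    have habs : |a| = a := abs_of_nonneg ha
    have hpabs : |piFB a b| = a + b - s := by
      rw [hpi, abs_of_nonpos (by linarith)]; ring
    rw [habs, hpabs]
    constructor
    · -- (2-r)a ≤ a+b-s, i.e. s ≤ b + (r-1)a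
      have hkey : s ≤ b + (r - 1) * a := by
        nlinarith [mul_nonneg (mul_nonneg ha (sub_nonneg.2 hab)) (sub_nonneg.2 hr1),
          mul_nonneg ha (sub_nonneg.2 hr1), mul_nonneg ha (ha.trans hab)]
      nlinarith
    · nlinarith [mul_nonneg ha hr0]
  · have habs : |a| = -a := abs_of_neg ha
    have hpabs : |piFB a b| = s - a - b := by
      rw [hpi, abs_of_nonneg (by linarith)]
    rw [habs, hpabs]
    have haab : 0 ≤ a * (a - b) := by nlinarith [mul_nonneg (neg_nonneg.2 ha.le) (neg_nonneg.2 (by linarith : a - b ≤ 0))]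
    constructor
    · -- (2-r)(-a) ≤ s-a-b ⟺ (r-1)a + b ≤ s
      have h1 : (r - 1) * a ≤ 0 := mul_nonpos_of_nonneg_of_nonpos (by linarith) ha.le
      nlinarith
    · -- s - a - b ≤ (2+r)(-a) ⟺ s ≤ b - (1+r)a
      have hRHS : 0 ≤ b - (1 + r) * a := by
        rcases le_or_gt 0 b with hb | hb
        · nlinarith
        · nlinarith [mul_nonneg (by linarith : (0:ℝ) ≤ 1 + r) (by linarith : (0:ℝ) ≤ -b)]
      have hkey : s ≤ b - (1 + r) * a := by
        nlinarith [mul_nonneg (by linarith : (0:ℝ) ≤ 1 + r) haab]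
      nlinarith

theorem stmt_15 (a b : ℝ) :
    (2 / (2 + Real.sqrt 2)) * |min a b| ≤ |piFB a b| ∧
    |piFB a b| ≤ (2 + Real.sqrt 2) * |min a b| := by
  rw [two_div_eq]
  rcases le_total a b with h | h
  · rw [min_eq_left h]; exact key_le a b h
  · rw [min_eq_right h]
    have : piFB a b = piFB b a := by unfold piFB; rw [add_comm (a^2)]; ring
    rw [this]; exact key_le b a h
end

section
/- The Fischer–Burmeister function π_FB(a,b) = √(a²+b²) − a − b satisfies: π_FB(a,b) = 0 if and only if a ≥ 0, b ≥ 0, and ab = 0. Moreover, the squared function (a,b) ↦ π_FB(a,b)² is continuously differentiable on ℝ², and its gradient vanishes at every point of the set {(a,b) | a ≥ 0, b ≥ 0, ab = 0}. -/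
theorem piFB_eq_zero_iff (a b : ℝ) : piFB a b = 0 ↔ 0 ≤ a ∧ 0 ≤ b ∧ a * b = 0 := by
  rw [piFB, sub_sub, sub_eq_zero]
  constructor
  · intro h
    have hab : 0 ≤ a + b := h ▸ Real.sqrt_nonneg _
    have hmul : a * b = 0 := by
      linear_combination -((Real.sqrt_eq_iff_eq_sq (by positivity) hab).1 h) / 2
    rcases mul_eq_zero.1 hmul with rfl | rfl
    · exact ⟨le_rfl, by simpa using hab, hmul⟩
    · exact ⟨by simpa using hab, le_rfl, hmul⟩
  · rintro ⟨ha, hb, hmul⟩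
    rw [Real.sqrt_eq_iff_eq_sq (by positivity) (add_nonneg ha hb)]
    linear_combination -2 * hmul

namespace ContinuousLinearMap

variable {E : Type*} [NormedAddCommGroup E] [InnerProductSpace ℝ E] (L : E →L[ℝ] ℝ)

theorem hasFDerivAt_mul_norm_zero : HasFDerivAt (fun x => L x * ‖x‖) (0 : E →L[ℝ] ℝ) 0 := by
  rw [hasFDerivAt_iff_isLittleO_nhds_zero]
  refine Asymptotics.IsBigO.trans_isLittleO (g := fun h : E => ‖h‖ ^ 2) ?_
    (Asymptotics.isLittleO_norm_pow_id one_lt_two)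
  refine Asymptotics.IsBigO.of_bound ‖L‖ (Filter.Eventually.of_forall fun h => ?_)
  simpa [norm_mul, sq, mul_assoc] using mul_le_mul_of_nonneg_right (L.le_opNorm h) (norm_nonneg h)

theorem norm_fderiv_mul_norm_le (x : E) :
    ‖fderiv ℝ (fun x => L x * ‖x‖) x‖ ≤ 2 * ‖L‖ * ‖x‖ := by
  rcases eq_or_ne x 0 with rfl | hx
  · simp [L.hasFDerivAt_mul_norm_zero.fderiv]
  have hnorm : ‖fderiv ℝ (‖·‖) x‖ ≤ 1 := by
    simpa using norm_fderiv_le_of_lipschitz ℝ (x₀ := x) lipschitzWith_one_norm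
  rw [fderiv_fun_mul L.differentiableAt ((contDiffAt_norm ℝ hx).differentiableAt one_ne_zero),
    L.fderiv]
  calc ‖L x • fderiv ℝ (‖·‖) x + ‖x‖ • L‖
      ≤ ‖L‖ * ‖x‖ * 1 + ‖x‖ * ‖L‖ := by
        refine (norm_add_le _ _).trans (add_le_add ?_ (by rw [norm_smul, norm_norm]))
        rw [norm_smul]
        exact mul_le_mul (L.le_opNorm x) hnorm (norm_nonneg _) (by positivity)
    _ = 2 * ‖L‖ * ‖x‖ := by ring

theorem contDiff_mul_norm : ContDiff ℝ 1 (fun x => L x * ‖x‖) := by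
  have hsmooth : ∀ x : E, x ≠ 0 → ContDiffAt ℝ 1 (fun x => L x * ‖x‖) x := fun x hx =>
    L.contDiff.contDiffAt.mul (contDiffAt_norm ℝ hx)
  rw [contDiff_one_iff_fderiv]
  constructor
  · intro x
    rcases eq_or_ne x 0 with rfl | hx
    · exact L.hasFDerivAt_mul_norm_zero.differentiableAt
    · exact (hsmooth x hx).differentiableAt one_ne_zero
  · rw [continuous_iff_continuousAt]
    intro x
    rcases eq_or_ne x 0 with rfl | hx
    · rw [ContinuousAt, L.hasFDerivAt_mul_norm_zero.fderiv]
      refine squeeze_zero_norm L.norm_fderiv_mul_norm_le ?_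
      exact Continuous.tendsto' (by fun_prop) _ _ (by simp)
    · exact (hsmooth x hx).continuousAt_fderiv one_ne_zero

end ContinuousLinearMap

-- `ℝ × ℝ` carries the sup norm; the Euclidean norm is the one of `WithLp 2 (ℝ × ℝ)`.
theorem norm_toLp_eq_sqrt (p : ℝ × ℝ) : ‖WithLp.toLp 2 p‖ = √(p.1 ^ 2 + p.2 ^ 2) := by
  simp [WithLp.prod_norm_eq_of_L2]

theorem piFB_sq_eq (p : ℝ × ℝ) :
    piFB p.1 p.2 ^ 2 =
      p.1 ^ 2 + p.2 ^ 2 + (p.1 + p.2) ^ 2 - 2 * ((p.1 + p.2) * ‖WithLp.toLp 2 p‖) := by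
  rw [piFB, norm_toLp_eq_sqrt]
  linear_combination Real.sq_sqrt (add_nonneg (sq_nonneg p.1) (sq_nonneg p.2))

theorem contDiff_piFB_sq : ContDiff ℝ 1 (fun p : ℝ × ℝ => piFB p.1 p.2 ^ 2) := by
  let L : WithLp 2 (ℝ × ℝ) →L[ℝ] ℝ :=
    (ContinuousLinearMap.fst ℝ ℝ ℝ + ContinuousLinearMap.snd ℝ ℝ ℝ).comp
      (WithLp.prodContinuousLinearEquiv 2 ℝ ℝ ℝ).toContinuousLinearMap
  have hL : ContDiff ℝ 1 (fun p : ℝ × ℝ => (p.1 + p.2) * ‖WithLp.toLp 2 p‖) :=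
    L.contDiff_mul_norm.comp WithLp.contDiff_toLp
  simp_rw [piFB_sq_eq]
  fun_prop

theorem stmt_16 :
    (∀ a b : ℝ, piFB a b = 0 ↔ (0 ≤ a ∧ 0 ≤ b ∧ a * b = 0)) ∧
    ContDiff ℝ 1 (fun p : ℝ × ℝ => (piFB p.1 p.2) ^ 2) ∧
    (∀ p : ℝ × ℝ, 0 ≤ p.1 → 0 ≤ p.2 → p.1 * p.2 = 0 →
      fderiv ℝ (fun p : ℝ × ℝ => (piFB p.1 p.2) ^ 2) p = 0) := by
  refine ⟨piFB_eq_zero_iff, contDiff_piFB_sq, fun p ha hb hab => ?_⟩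
  have hzero : piFB p.1 p.2 = 0 := (piFB_eq_zero_iff _ _).2 ⟨ha, hb, hab⟩
  refine IsLocalMin.fderiv_eq_zero (Filter.Eventually.of_forall fun q => ?_)
  simpa [hzero] using sq_nonneg (piFB q.1 q.2)
end

section
/- The function (a,b) ↦ π_FB(|a|, |b|)², where π_FB(s,t) = √(s²+t²) − s − t, is continuously differentiable on ℝ². -/
/-!
Write `F(a, b) = π_FB(|a|, |b|) = √(a² + b²) - |a| - |b|`. Since
`max |a| |b| ≤ √(a² + b²) ≤ |a| + |b|`, we have `|F(a, b)| ≤ min |a| |b|`, so on the axes `F`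
vanishes and `F²` is `O(‖h‖²)`, hence has derivative `0`. Off the axes `F` is smooth with a
bounded gradient `G`, so `(F²)' = 2 F G`; this is continuous off the axes and tends to `0` at the
axes because `F → 0` there while `G` stays bounded.
-/

open Filter Topology Asymptotics ContinuousLinearMap

lemma piFB_comm (s t : ℝ) : piFB s t = piFB t s := by
  simp only [piFB, add_comm (s ^ 2)]; ring

lemma abs_piFB_le_left {s t : ℝ} (hs : 0 ≤ s) (ht : 0 ≤ t) : |piFB s t| ≤ s := by
  have h_ge : t ≤ √(s ^ 2 + t ^ 2) := Real.le_sqrt_of_sq_le (by nlinarith)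
  have h_le : √(s ^ 2 + t ^ 2) ≤ s + t := Real.sqrt_le_left (by positivity) |>.2 (by nlinarith)
  rw [piFB, abs_le]
  constructor <;> linarith

lemma abs_piFB_le_right {s t : ℝ} (hs : 0 ≤ s) (ht : 0 ≤ t) : |piFB s t| ≤ t :=
  piFB_comm s t ▸ abs_piFB_le_left ht hs

lemma abs_piFB_abs_le_norm_sub_of_mem_axes {p : ℝ × ℝ} (hp : p.1 = 0 ∨ p.2 = 0) (q : ℝ × ℝ) :
    |(piFB |q.1| |q.2|)| ≤ ‖q - p‖ := by
  rcases hp with hp | hp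
  · calc |(piFB |q.1| |q.2|)| ≤ |q.1| := abs_piFB_le_left (abs_nonneg _) (abs_nonneg _)
      _ = ‖(q - p).1‖ := by simp [hp]
      _ ≤ ‖q - p‖ := norm_fst_le _
  · calc |(piFB |q.1| |q.2|)| ≤ |q.2| := abs_piFB_le_right (abs_nonneg _) (abs_nonneg _)
      _ = ‖(q - p).2‖ := by simp [hp]
      _ ≤ ‖q - p‖ := norm_snd_le _

lemma piFB_abs_eq_zero_of_mem_axes {p : ℝ × ℝ} (hp : p.1 = 0 ∨ p.2 = 0) : piFB |p.1| |p.2| = 0 :=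
  abs_nonpos_iff.1 <| by simpa using abs_piFB_abs_le_norm_sub_of_mem_axes hp p

lemma hasFDerivAt_piFB_abs_sq_of_mem_axes {p : ℝ × ℝ} (hp : p.1 = 0 ∨ p.2 = 0) :
    HasFDerivAt (fun q : ℝ × ℝ => piFB |q.1| |q.2| ^ 2) (0 : ℝ × ℝ →L[ℝ] ℝ) p := by
  refine IsBigO.hasFDerivAt (n := 2) (.of_bound 1 <| .of_forall fun q => ?_) one_lt_two
  simpa [abs_pow] using
    pow_le_pow_left₀ (abs_nonneg _) (abs_piFB_abs_le_norm_sub_of_mem_axes hp q) 2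

lemma continuous_piFB_abs : Continuous fun q : ℝ × ℝ => piFB |q.1| |q.2| := by
  unfold piFB; fun_prop

/-- The gradient of `q ↦ piFB |q.1| |q.2|` off the axes; its (junk) values on the axes only
ever get multiplied by `piFB |p.1| |p.2| = 0`. -/
noncomputable def fbGrad (p : ℝ × ℝ) : ℝ × ℝ →L[ℝ] ℝ :=
  (p.1 / √(p.1 ^ 2 + p.2 ^ 2) - SignType.sign p.1) • fst ℝ ℝ ℝ +
    (p.2 / √(p.1 ^ 2 + p.2 ^ 2) - SignType.sign p.2) • snd ℝ ℝ ℝ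

lemma hasFDerivAt_piFB_abs {p : ℝ × ℝ} (h1 : p.1 ≠ 0) (h2 : p.2 ≠ 0) :
    HasFDerivAt (fun q : ℝ × ℝ => piFB |q.1| |q.2|) (fbGrad p) p := by
  have hpos : p.1 ^ 2 + p.2 ^ 2 ≠ 0 := by positivity
  have hsqrt := (((hasFDerivAt_fst (𝕜 := ℝ) (p := p)).pow 2).add
    ((hasFDerivAt_snd (𝕜 := ℝ) (p := p)).pow 2)).sqrt hpos
  have habs1 := (hasDerivAt_abs h1).comp_hasFDerivAt p (hasFDerivAt_fst (𝕜 := ℝ) (p := p))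
  have habs2 := (hasDerivAt_abs h2).comp_hasFDerivAt p (hasFDerivAt_snd (𝕜 := ℝ) (p := p))
  rw [show (fun q : ℝ × ℝ => piFB |q.1| |q.2|) = fun q => √(q.1 ^ 2 + q.2 ^ 2) - |q.1| - |q.2|
    from funext fun q => by simp [piFB, sq_abs]]
  refine ((hsqrt.sub habs1).sub habs2).congr_fderiv ?_
  simp only [fbGrad, Pi.add_apply, nsmul_eq_mul]
  module

lemma norm_fbGrad_le (p : ℝ × ℝ) : ‖fbGrad p‖ ≤ 4 := by
  have hdiv : ∀ x y : ℝ, |x / √(x ^ 2 + y ^ 2)| ≤ 1 := fun x y => by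
    rw [abs_div, abs_of_nonneg (Real.sqrt_nonneg _)]
    exact div_le_one_of_le₀ (Real.abs_le_sqrt (by nlinarith)) (by positivity)
  have hsign : ∀ x : ℝ, |(SignType.sign x : ℝ)| ≤ 1 := fun x => by
    rcases lt_trichotomy x 0 with h | h | h <;> simp [h]
  have hcoef : ∀ x y : ℝ, ‖x / √(x ^ 2 + y ^ 2) - SignType.sign x‖ ≤ 2 := fun x y =>
    (norm_sub_le _ _).trans (by simp only [Real.norm_eq_abs]; linarith [hdiv x y, hsign x])
  calc ‖fbGrad p‖ ≤ 2 * 1 + 2 * 1 := by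
        refine (norm_add_le _ _).trans (add_le_add ?_ ?_)
        · exact (norm_smul_le _ _).trans
            (mul_le_mul (hcoef _ _) (norm_fst_le ℝ ℝ ℝ) (norm_nonneg _) zero_le_two)
        · exact (norm_smul_le _ _).trans
            (mul_le_mul (by simpa only [add_comm (p.1 ^ 2)] using hcoef p.2 p.1)
              (norm_snd_le ℝ ℝ ℝ) (norm_nonneg _) zero_le_two)
    _ = 4 := by norm_num

lemma continuousAt_fbGrad {p : ℝ × ℝ} (h1 : p.1 ≠ 0) (h2 : p.2 ≠ 0) : ContinuousAt fbGrad p := by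
  have hpos : √(p.1 ^ 2 + p.2 ^ 2) ≠ 0 := by positivity
  have hsign : ∀ {x : ℝ}, x ≠ 0 → ContinuousAt (fun y : ℝ => (SignType.sign y : ℝ)) x :=
    fun hx => (continuous_of_discreteTopology (f := fun s : SignType => (s : ℝ))).continuousAt.comp
      (continuousAt_sign_of_ne_zero hx)
  have hs1 := (hsign h1).comp continuousAt_fst (x := p)
  have hs2 := (hsign h2).comp continuousAt_snd (x := p)
  unfold fbGrad
  fun_prop (disch := assumption)

lemma hasFDerivAt_piFB_abs_sq (p : ℝ × ℝ) :
    HasFDerivAt (fun q : ℝ × ℝ => piFB |q.1| |q.2| ^ 2) ((2 * piFB |p.1| |p.2|) • fbGrad p) p := by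
  by_cases hp : p.1 = 0 ∨ p.2 = 0
  · simpa [piFB_abs_eq_zero_of_mem_axes hp] using hasFDerivAt_piFB_abs_sq_of_mem_axes hp
  · push Not at hp
    simpa using (hasFDerivAt_piFB_abs hp.1 hp.2).pow 2

lemma continuous_piFB_abs_smul_fbGrad :
    Continuous fun p : ℝ × ℝ => (2 * piFB |p.1| |p.2|) • fbGrad p := by
  refine continuous_iff_continuousAt.2 fun p => ?_
  by_cases hp : p.1 = 0 ∨ p.2 = 0
  · have h0 : piFB |p.1| |p.2| = 0 := piFB_abs_eq_zero_of_mem_axes hp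
    have hlim : Tendsto (fun q : ℝ × ℝ => 2 * piFB |q.1| |q.2|) (𝓝 p) (𝓝 0) := by
      simpa [h0] using (continuous_piFB_abs.tendsto p).const_mul 2
    have hbdd : IsBoundedUnder (· ≤ ·) (𝓝 p) (norm ∘ fbGrad) :=
      isBoundedUnder_of ⟨4, norm_fbGrad_le⟩
    simpa [ContinuousAt, h0] using hlim.zero_smul_isBoundedUnder_le hbdd
  · push Not at hp
    exact (continuous_const.mul continuous_piFB_abs).continuousAt.smul
      (continuousAt_fbGrad hp.1 hp.2)

theorem stmt_17 : ContDiff ℝ 1 (fun p : ℝ × ℝ => (piFB |p.1| |p.2|) ^ 2) :=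
  contDiff_one_iff_hasFDerivAt.2 ⟨_, continuous_piFB_abs_smul_fbGrad, hasFDerivAt_piFB_abs_sq⟩
end

section
/- Define ψ_1 = max(−a,|b|,|μ|), ψ_2 = max(−b,|a|,|ν|), ψ_3 = max(|a|,|b|,μ,ν), φ_1 = min(ψ_1,ψ_2,ψ_3), and θ_{FB} as the ℝ^4-valued function with components |π_FB(a,b)|, π_FB(|a|,|μ|), π_FB(|b|,|ν|), and (0 if μ ≤ 0 and ν ≤ 0, else π_FB(|μ|,|ν|)), where π_FB(s,t) = √(s²+t²) − s − t. Then there exist constants c, C > 0 such that c·|φ_1(w)| ≤ ‖θ_{FB}(w)‖ ≤ C·|φ_1(w)| for all w = (a,b,μ,ν) ∈ ℝ^4. -/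
lemma sqrt_facts (a b : ℝ) : 0 ≤ Real.sqrt (a ^ 2 + b ^ 2) ∧
    (Real.sqrt (a ^ 2 + b ^ 2)) ^ 2 = a ^ 2 + b ^ 2 := by
  constructor
  · exact Real.sqrt_nonneg _
  · exact Real.sq_sqrt (by positivity)

lemma sqrt2_facts : (Real.sqrt 2) ^ 2 = 2 ∧ 1 ≤ Real.sqrt 2 ∧ Real.sqrt 2 ≤ 2 := by
  refine ⟨Real.sq_sqrt (by norm_num), ?_, ?_⟩
  · nlinarith [Real.sq_sqrt (show (0:ℝ) ≤ 2 by norm_num), Real.sqrt_nonneg 2]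
  · nlinarith [Real.sq_sqrt (show (0:ℝ) ≤ 2 by norm_num), Real.sqrt_nonneg 2]

/-- bounds for nonnegative arguments -/
lemma piFB_nonneg_bounds (s t : ℝ) (hs : 0 ≤ s) (ht : 0 ≤ t) :
    (2 - Real.sqrt 2) * min s t ≤ -(piFB s t) ∧ -(piFB s t) ≤ min s t := by
  obtain ⟨hr0, hr2⟩ := sqrt_facts s t
  obtain ⟨h2, h21, h22⟩ := sqrt2_facts
  set r := Real.sqrt (s ^ 2 + t ^ 2) with hr
  have hrs : s ≤ r := by nlinarith
  have hrt : t ≤ r := by nlinarith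
  unfold piFB
  rw [← hr]
  constructor
  · rcases le_total s t with h | h
    · rw [min_eq_left h]
      have hx : (0:ℝ) ≤ (Real.sqrt 2 - 1) * s + t := by nlinarith
      have key : r ≤ (Real.sqrt 2 - 1) * s + t := by
        rw [hr]
        calc Real.sqrt (s ^ 2 + t ^ 2) ≤ Real.sqrt (((Real.sqrt 2 - 1) * s + t) ^ 2) :=
              Real.sqrt_le_sqrt (by nlinarith [mul_nonneg hs (sub_nonneg.mpr h)])
          _ = (Real.sqrt 2 - 1) * s + t := Real.sqrt_sq hx
      linarith
    · rw [min_eq_right h]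
      have hx : (0:ℝ) ≤ (Real.sqrt 2 - 1) * t + s := by nlinarith
      have key : r ≤ (Real.sqrt 2 - 1) * t + s := by
        rw [hr]
        calc Real.sqrt (s ^ 2 + t ^ 2) ≤ Real.sqrt (((Real.sqrt 2 - 1) * t + s) ^ 2) :=
              Real.sqrt_le_sqrt (by nlinarith [mul_nonneg ht (sub_nonneg.mpr h)])
          _ = (Real.sqrt 2 - 1) * t + s := Real.sqrt_sq hx
      linarith
  · rcases le_total s t with h | h
    · rw [min_eq_left h]; linarith
    · rw [min_eq_right h]; linarith

lemma piFB_comm_s18 (a b : ℝ) : piFB a b = piFB b a := by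
  unfold piFB; rw [add_comm (a^2)]; ring

lemma piFB_abs_bounds' (a b : ℝ) (hba : b ≤ a) :
    (2 - Real.sqrt 2) * |min a b| ≤ |piFB a b| ∧ |piFB a b| ≤ (2 + Real.sqrt 2) * |min a b| := by
  obtain ⟨hr0, hr2⟩ := sqrt_facts a b
  obtain ⟨h2, h21, h22⟩ := sqrt2_facts
  rw [min_eq_right hba]
  rcases le_total 0 b with hb | hb
  · -- both nonneg
    have := piFB_nonneg_bounds a b (le_trans hb hba) hb
    rw [min_eq_right hba] at this
    have hle : piFB a b ≤ 0 := by nlinarith [this.1]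
    rw [abs_of_nonpos hle, abs_of_nonneg hb]
    constructor
    · linarith [this.1]
    · nlinarith [this.2]
  · -- b ≤ 0
    set r := Real.sqrt (a ^ 2 + b ^ 2) with hr
    have hra : |a| ≤ r := by
      rcases abs_cases a with ⟨h, _⟩ | ⟨h, _⟩ <;> nlinarith
    have hpos : -b ≤ piFB a b := by
      unfold piFB; rw [← hr]
      rcases abs_cases a with ⟨h, _⟩ | ⟨h, _⟩ <;> linarith
    have habs : |piFB a b| = piFB a b := abs_of_nonneg (by linarith)
    rw [habs, abs_of_nonpos hb]
    constructor
    · nlinarith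
    · rcases le_total 0 a with ha | ha
      · have hrab : r ≤ a - b := by nlinarith [sq_nonneg (a - b - r), sq_nonneg a, sq_nonneg b]
        unfold piFB; rw [← hr]; nlinarith
      · -- both nonpos, |a| ≤ |b|, r ≤ sqrt2 * (-b)
        have h1 : r ≤ Real.sqrt 2 * (-b) := by
          rw [hr]
          calc Real.sqrt (a ^ 2 + b ^ 2) ≤ Real.sqrt ((Real.sqrt 2 * (-b)) ^ 2) :=
                Real.sqrt_le_sqrt (by nlinarith)
            _ = Real.sqrt 2 * (-b) := Real.sqrt_sq (by nlinarith)
        unfold piFB; rw [← hr]; nlinarith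
    
lemma piFB_abs_bounds (a b : ℝ) :
    (2 - Real.sqrt 2) * |min a b| ≤ |piFB a b| ∧ |piFB a b| ≤ (2 + Real.sqrt 2) * |min a b| := by
  rcases le_total b a with h | h
  · exact piFB_abs_bounds' a b h
  · rw [piFB_comm_s18, min_comm]; exact piFB_abs_bounds' b a h

noncomputable def thMax (a b mu nu : ℝ) : ℝ :=
  max |min a b| (max (min |a| |mu|) (max (min |b| |nu|)
    (max 0 (max (min mu |nu|) (min nu |mu|)))))

lemma thMax_le_phi1 (a b mu nu : ℝ) : thMax a b mu nu ≤ phi1 a b mu nu := by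
  have t1p1 : |min a b| ≤ psi1 a b mu nu := by
    unfold psi1
    rcases le_total a b with h | h
    · rw [min_eq_left h]
      rcases abs_cases a with ⟨h1, _⟩ | ⟨h1, _⟩
      · rw [h1]
        have : a ≤ |b| := le_trans h (le_abs_self b)
        exact le_trans this (le_trans (le_max_left _ _) (le_max_right _ _))
      · rw [h1]; exact le_max_left _ _
    · rw [min_eq_right h]
      exact le_trans (le_max_left _ _) (le_max_right _ _)
  have t1p2 : |min a b| ≤ psi2 a b mu nu := by
    unfold psi2
    rcases le_total a b with h | h
    · rw [min_eq_left h]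
      exact le_trans (le_max_left _ _) (le_max_right _ _)
    · rw [min_eq_right h]
      rcases abs_cases b with ⟨h1, _⟩ | ⟨h1, _⟩
      · rw [h1]
        have : b ≤ |a| := le_trans h (le_abs_self a)
        exact le_trans this (le_trans (le_max_left _ _) (le_max_right _ _))
      · rw [h1]; exact le_max_left _ _
  have t1p3 : |min a b| ≤ psi3 a b mu nu := by
    unfold psi3
    rcases le_total a b with h | h
    · rw [min_eq_left h]; exact le_max_left _ _
    · rw [min_eq_right h]; exact le_trans (le_max_left _ _) (le_max_right _ _)
  have t2p1 : min |a| |mu| ≤ psi1 a b mu nu :=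
    le_trans (min_le_right _ _) (le_trans (le_max_right _ _) (le_max_right _ _))
  have t2p2 : min |a| |mu| ≤ psi2 a b mu nu :=
    le_trans (min_le_left _ _) (le_trans (le_max_left _ _) (le_max_right _ _))
  have t2p3 : min |a| |mu| ≤ psi3 a b mu nu :=
    le_trans (min_le_left _ _) (le_max_left _ _)
  have t3p1 : min |b| |nu| ≤ psi1 a b mu nu :=
    le_trans (min_le_left _ _) (le_trans (le_max_left _ _) (le_max_right _ _))
  have t3p2 : min |b| |nu| ≤ psi2 a b mu nu :=
    le_trans (min_le_right _ _) (le_trans (le_max_right _ _) (le_max_right _ _))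
  have t3p3 : min |b| |nu| ≤ psi3 a b mu nu :=
    le_trans (min_le_left _ _) (le_trans (le_max_left _ _) (le_max_right _ _))
  have hmu : max 0 (max (min mu |nu|) (min nu |mu|)) ≤ |mu| := by
    refine max_le (abs_nonneg mu) (max_le ?_ (min_le_right _ _))
    exact le_trans (min_le_left _ _) (le_abs_self mu)
  have hnu : max 0 (max (min mu |nu|) (min nu |mu|)) ≤ |nu| := by
    refine max_le (abs_nonneg nu) (max_le (min_le_right _ _) ?_)
    exact le_trans (min_le_left _ _) (le_abs_self nu)
  have t4p1 : max 0 (max (min mu |nu|) (min nu |mu|)) ≤ psi1 a b mu nu :=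
    le_trans hmu (le_trans (le_max_right _ _) (le_max_right _ _))
  have t4p2 : max 0 (max (min mu |nu|) (min nu |mu|)) ≤ psi2 a b mu nu :=
    le_trans hnu (le_trans (le_max_right _ _) (le_max_right _ _))
  have t4p3 : max 0 (max (min mu |nu|) (min nu |mu|)) ≤ psi3 a b mu nu := by
    refine max_le ?_ (max_le ?_ ?_)
    · exact le_trans (abs_nonneg a) (le_max_left _ _)
    · refine le_trans (min_le_left _ _) ?_
      unfold psi3
      exact le_trans (le_max_left mu nu) (le_trans (le_max_right _ _) (le_max_right _ _))
    · refine le_trans (min_le_left _ _) ?_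
      unfold psi3
      exact le_trans (le_max_right mu nu) (le_trans (le_max_right _ _) (le_max_right _ _))
  unfold thMax phi1
  refine le_min (max_le t1p1 (max_le t2p1 (max_le t3p1 t4p1)))
    (le_min (max_le t1p2 (max_le t2p2 (max_le t3p2 t4p2)))
      (max_le t1p3 (max_le t2p3 (max_le t3p3 t4p3))))

lemma phi1_le_thMax (a b mu nu : ℝ) : phi1 a b mu nu ≤ thMax a b mu nu := by
  by_contra hc
  push_neg at hc
  set M := thMax a b mu nu with hM
  have h1 : M < psi1 a b mu nu := lt_of_lt_of_le hc (min_le_left _ _)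
  have h2 : M < psi2 a b mu nu :=
    lt_of_lt_of_le hc (le_trans (min_le_right _ _) (min_le_left _ _))
  have h3 : M < psi3 a b mu nu :=
    lt_of_lt_of_le hc (le_trans (min_le_right _ _) (min_le_right _ _))
  have t1 : |min a b| ≤ M := le_max_left _ _
  have t2 : min |a| |mu| ≤ M := le_trans (le_max_left _ _) (le_max_right _ _)
  have t3 : min |b| |nu| ≤ M :=
    le_trans (le_max_left _ _) (le_trans (le_max_right _ _) (le_max_right _ _))
  have t4a : min mu |nu| ≤ M :=
    le_trans (le_trans (le_max_left _ _) (le_max_right _ _))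
      (le_trans (le_max_right _ _) (le_trans (le_max_right _ _) (le_max_right _ _)))
  have t4b : min nu |mu| ≤ M :=
    le_trans (le_trans (le_max_right _ _) (le_max_right _ _))
      (le_trans (le_max_right _ _) (le_trans (le_max_right _ _) (le_max_right _ _)))
  have hMa : -M ≤ a := by
    have := (abs_le.mp t1).1
    have := min_le_left a b
    linarith
  have hMb : -M ≤ b := by
    have := (abs_le.mp t1).1
    have := min_le_right a b
    linarith
  -- psi1 > M gives M < |b| or M < |mu|
  have P1 : M < |b| ∨ M < |mu| := by
    rcases lt_max_iff.mp h1 with h | h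
    · exfalso; linarith
    · exact lt_max_iff.mp h
  have P2 : M < |a| ∨ M < |nu| := by
    rcases lt_max_iff.mp h2 with h | h
    · exfalso; linarith
    · exact lt_max_iff.mp h
  have P3 : M < |a| ∨ M < |b| ∨ M < mu ∨ M < nu := by
    rcases lt_max_iff.mp h3 with h | h
    · exact Or.inl h
    · rcases lt_max_iff.mp h with h | h
      · exact Or.inr (Or.inl h)
      · exact Or.inr (Or.inr (lt_max_iff.mp h))
  rcases min_le_iff.mp t2 with ha | hmu
  · -- |a| ≤ M
    have hnuM : M < |nu| := by
      rcases P2 with h | h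
      · exact absurd h (not_lt.mpr ha)
      · exact h
    have hbM : |b| ≤ M := by
      rcases min_le_iff.mp t3 with h | h
      · exact h
      · exact absurd hnuM (not_lt.mpr h)
    have hmuM : M < |mu| := by
      rcases P1 with h | h
      · exact absurd h (not_lt.mpr hbM)
      · exact h
    rcases P3 with h | h | h | h
    · linarith
    · linarith
    · rcases min_le_iff.mp t4a with h' | h' <;> linarith
    · rcases min_le_iff.mp t4b with h' | h' <;> linarith
  · -- |mu| ≤ M
    have hbM : M < |b| := by
      rcases P1 with h | h
      · exact h
      · exact absurd h (not_lt.mpr hmu)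
    have hnuM : |nu| ≤ M := by
      rcases min_le_iff.mp t3 with h | h
      · exact absurd hbM (not_lt.mpr h)
      · exact h
    have haM : M < |a| := by
      rcases P2 with h | h
      · exact h
      · exact absurd h (not_lt.mpr hnuM)
    have ha' : M < a := by
      rcases lt_abs.mp haM with h | h
      · exact h
      · linarith
    have hb' : M < b := by
      rcases lt_abs.mp hbM with h | h
      · exact h
      · linarith
    have hmin : M < min a b := lt_min ha' hb'
    have := le_abs_self (min a b)
    linarith

lemma th4_pos (mu nu : ℝ) (h : ¬(mu ≤ 0 ∧ nu ≤ 0)) :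
    max 0 (max (min mu |nu|) (min nu |mu|)) = min |mu| |nu| := by
  have key : ∀ m n : ℝ, 0 < m → max 0 (max (min m |n|) (min n |m|)) = min |m| |n| := by
    intro m n hm
    have h1 : min m |n| = min |m| |n| := by rw [abs_of_pos hm]
    apply le_antisymm
    · refine max_le (le_min (abs_nonneg m) (abs_nonneg n)) (max_le (le_of_eq h1) ?_)
      have : min n |m| ≤ min |n| |m| := min_le_min (le_abs_self n) le_rfl
      rw [min_comm |n| |m|] at this
      exact this
    · exact le_trans (le_of_eq h1.symm) (le_trans (le_max_left _ _) (le_max_right _ _))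
  rcases not_and_or.mp h with h | h
  · exact key mu nu (lt_of_not_ge h)
  · rw [min_comm |mu| |nu|, max_comm (min mu |nu|) (min nu |mu|)]
    exact key nu mu (lt_of_not_ge h)

lemma sq_le_sq_of_abs_le {x K : ℝ} (h : |x| ≤ K) : x ^ 2 ≤ K ^ 2 := by
  nlinarith [abs_nonneg x, sq_abs x]

lemma abs_le_sqrt_of_sq_le {x S : ℝ} (h : x ^ 2 ≤ S) : |x| ≤ Real.sqrt S := by
  rw [← Real.sqrt_sq_eq_abs]; exact Real.sqrt_le_sqrt h

/-- The Euclidean norm of the `ℝ^4`-valued function `θ_FB`. -/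
noncomputable def thetaFBnorm (a b mu nu : ℝ) : ℝ :=
  Real.sqrt (|piFB a b| ^ 2 + (piFB |a| |mu|) ^ 2 + (piFB |b| |nu|) ^ 2 +
    (if mu ≤ 0 ∧ nu ≤ 0 then (0 : ℝ) else piFB |mu| |nu|) ^ 2)

theorem stmt_18 :
    ∃ c > (0 : ℝ), ∃ C > (0 : ℝ), ∀ a b mu nu : ℝ,
      c * |phi1 a b mu nu| ≤ thetaFBnorm a b mu nu ∧
      thetaFBnorm a b mu nu ≤ C * |phi1 a b mu nu| := by
  obtain ⟨h2, h21, h22⟩ := sqrt2_facts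
  set c : ℝ := 2 - Real.sqrt 2 with hc
  set C0 : ℝ := 2 + Real.sqrt 2 with hC0
  have hc0 : (0 : ℝ) < c := by rw [hc]; nlinarith
  have hC00 : (1 : ℝ) ≤ C0 := by rw [hC0]; linarith
  refine ⟨c, hc0, 2 * C0, by linarith, ?_⟩
  intro a b mu nu
  set t1 : ℝ := |min a b| with ht1
  set t2 : ℝ := min |a| |mu| with ht2
  set t3 : ℝ := min |b| |nu| with ht3
  set t4 : ℝ := max 0 (max (min mu |nu|) (min nu |mu|)) with ht4
  set M : ℝ := thMax a b mu nu with hM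
  have hMdef : M = max t1 (max t2 (max t3 t4)) := rfl
  have hphiM : phi1 a b mu nu = M :=
    le_antisymm (phi1_le_thMax a b mu nu) (thMax_le_phi1 a b mu nu)
  have ht10 : 0 ≤ t1 := abs_nonneg _
  have ht20 : 0 ≤ t2 := le_min (abs_nonneg _) (abs_nonneg _)
  have ht30 : 0 ≤ t3 := le_min (abs_nonneg _) (abs_nonneg _)
  have ht40 : 0 ≤ t4 := le_max_left _ _
  have hM0 : 0 ≤ M := le_trans ht10 (by rw [hMdef]; exact le_max_left _ _)
  have hMt1 : t1 ≤ M := by rw [hMdef]; exact le_max_left _ _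
  have hMt2 : t2 ≤ M := by
    rw [hMdef]; exact le_trans (le_max_left _ _) (le_max_right _ _)
  have hMt3 : t3 ≤ M := by
    rw [hMdef]
    exact le_trans (le_trans (le_max_left _ _) (le_max_right _ _)) (le_max_right _ _)
  have hMt4 : t4 ≤ M := by
    rw [hMdef]
    exact le_trans (le_trans (le_max_right _ _) (le_max_right _ _)) (le_max_right _ _)
  -- components
  set x1 : ℝ := |piFB a b| with hx1
  set x2 : ℝ := piFB |a| |mu| with hx2
  set x3 : ℝ := piFB |b| |nu| with hx3
  set x4 : ℝ := (if mu ≤ 0 ∧ nu ≤ 0 then (0 : ℝ) else piFB |mu| |nu|) with hx4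
  have hN : thetaFBnorm a b mu nu = Real.sqrt (x1 ^ 2 + x2 ^ 2 + x3 ^ 2 + x4 ^ 2) := rfl
  have hb1 : c * t1 ≤ |x1| ∧ |x1| ≤ C0 * t1 := by
    obtain ⟨l, u⟩ := piFB_abs_bounds a b
    rw [hx1, abs_abs]
    exact ⟨l, u⟩
  have nonneg_case : ∀ s t : ℝ, 0 ≤ s → 0 ≤ t →
      c * min s t ≤ |piFB s t| ∧ |piFB s t| ≤ C0 * min s t := by
    intro s t hs ht
    obtain ⟨l, u⟩ := piFB_nonneg_bounds s t hs ht
    have hmin0 : 0 ≤ min s t := le_min hs ht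
    have hc0' := mul_nonneg (sub_nonneg.mpr h22) hmin0
    have hpi : piFB s t ≤ 0 := by linarith
    have hCmin : min s t ≤ C0 * min s t := le_mul_of_one_le_left hmin0 hC00
    rw [abs_of_nonpos hpi]
    exact ⟨l, by linarith⟩
  have hb2 : c * t2 ≤ |x2| ∧ |x2| ≤ C0 * t2 :=
    nonneg_case |a| |mu| (abs_nonneg _) (abs_nonneg _)
  have hb3 : c * t3 ≤ |x3| ∧ |x3| ≤ C0 * t3 :=
    nonneg_case |b| |nu| (abs_nonneg _) (abs_nonneg _)
  have hb4 : c * t4 ≤ |x4| ∧ |x4| ≤ C0 * t4 := by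
    by_cases hif : mu ≤ 0 ∧ nu ≤ 0
    · have hx40 : x4 = 0 := by rw [hx4]; exact if_pos hif
      have ht4z : t4 = 0 := by
        rw [ht4]
        refine max_eq_left (max_le ?_ ?_)
        · exact le_trans (min_le_left _ _) hif.1
        · exact le_trans (min_le_left _ _) hif.2
      rw [hx40, ht4z]
      simp
    · have hx4e : x4 = piFB |mu| |nu| := by rw [hx4]; exact if_neg hif
      have ht4e : t4 = min |mu| |nu| := by rw [ht4]; exact th4_pos mu nu hif
      rw [hx4e, ht4e]
      exact nonneg_case |mu| |nu| (abs_nonneg _) (abs_nonneg _)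
  constructor
  · -- lower bound
    rw [hphiM, abs_of_nonneg hM0, hN]
    have key : ∀ x t : ℝ, c * t ≤ |x| → |x| ≤ Real.sqrt (x1 ^ 2 + x2 ^ 2 + x3 ^ 2 + x4 ^ 2) →
        c * t ≤ Real.sqrt (x1 ^ 2 + x2 ^ 2 + x3 ^ 2 + x4 ^ 2) := by
      intro x t h1' h2'; linarith
    have s1 : |x1| ≤ Real.sqrt (x1 ^ 2 + x2 ^ 2 + x3 ^ 2 + x4 ^ 2) :=
      abs_le_sqrt_of_sq_le (by linarith [sq_nonneg x2, sq_nonneg x3, sq_nonneg x4])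
    have s2 : |x2| ≤ Real.sqrt (x1 ^ 2 + x2 ^ 2 + x3 ^ 2 + x4 ^ 2) :=
      abs_le_sqrt_of_sq_le (by linarith [sq_nonneg x1, sq_nonneg x3, sq_nonneg x4])
    have s3 : |x3| ≤ Real.sqrt (x1 ^ 2 + x2 ^ 2 + x3 ^ 2 + x4 ^ 2) :=
      abs_le_sqrt_of_sq_le (by linarith [sq_nonneg x1, sq_nonneg x2, sq_nonneg x4])
    have s4 : |x4| ≤ Real.sqrt (x1 ^ 2 + x2 ^ 2 + x3 ^ 2 + x4 ^ 2) :=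
      abs_le_sqrt_of_sq_le (by linarith [sq_nonneg x1, sq_nonneg x2, sq_nonneg x3])
    have h4 : M = t1 ∨ M = t2 ∨ M = t3 ∨ M = t4 := by
      rw [hMdef]
      rcases max_choice t1 (max t2 (max t3 t4)) with h | h
      · exact Or.inl h
      · rcases max_choice t2 (max t3 t4) with h' | h'
        · exact Or.inr (Or.inl (h.trans h'))
        · rcases max_choice t3 t4 with h'' | h''
          · exact Or.inr (Or.inr (Or.inl (h.trans (h'.trans h''))))
          · exact Or.inr (Or.inr (Or.inr (h.trans (h'.trans h''))))
    rcases h4 with h | h | h | h <;> rw [h]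
    · linarith [hb1.1, s1]
    · linarith [hb2.1, s2]
    · linarith [hb3.1, s3]
    · linarith [hb4.1, s4]
  · -- upper bound
    rw [hphiM, abs_of_nonneg hM0, hN]
    set K : ℝ := C0 * M with hK
    have hK0 : 0 ≤ K := mul_nonneg (by rw [hC0]; linarith) hM0
    have hq : ∀ x t : ℝ, |x| ≤ C0 * t → t ≤ M → x ^ 2 ≤ K ^ 2 := by
      intro x t h1' h2'
      have h3 : |x| ≤ K := le_trans h1'
        (by rw [hK]; exact mul_le_mul_of_nonneg_left h2' (by linarith))
      exact sq_le_sq_of_abs_le h3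
    have hsum : x1 ^ 2 + x2 ^ 2 + x3 ^ 2 + x4 ^ 2 ≤ (2 * K) ^ 2 := by
      have q1 := hq x1 t1 hb1.2 hMt1
      have q2 := hq x2 t2 hb2.2 hMt2
      have q3 := hq x3 t3 hb3.2 hMt3
      have q4 := hq x4 t4 hb4.2 hMt4
      linarith [sq_nonneg K]
    calc Real.sqrt (x1 ^ 2 + x2 ^ 2 + x3 ^ 2 + x4 ^ 2) ≤ Real.sqrt ((2 * K) ^ 2) :=
          Real.sqrt_le_sqrt hsum
      _ = 2 * K := Real.sqrt_sq (by linarith)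
      _ = 2 * C0 * M := by rw [hK]; ring
end
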